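/- arXiv:2103.15453 — 9 statements merged into one kernel-verified Lean document; each statement's English description precedes it below -/
import Mathlib

section
/- Non-repetitive alternating plays with pointers on a conflict-free arena A are in bijection with alternating plays on A: given a sequence of distinct events forming an alternating play, the pointer structure is uniquely determined by the arena's immediate causality, and conversely every valid play with pointers whose events are pairwise distinct arises from a unique alternating play. -/
set_option autoImplicit false

/-- Immediate causality `a ⋗ b` for a relation `le`: `a < b` with nothing strictly
in between. -/
def immOf {α : Type} (le : α → α → Prop) (a b : α) : Prop :=
  le a b ∧ a ≠ b ∧ ∀ c, le a c → le c b → c = a ∨ c = b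

/-- Configurations: finite, down-closed, consistent sets. -/
def ConfigOf {α : Type} (le conflict : α → α → Prop) (x : Set α) : Prop :=
  x.Finite ∧ (∀ e ∈ x, ∀ e', le e' e → e' ∈ x) ∧ ∀ e ∈ x, ∀ e' ∈ x, ¬ conflict e e'

/-- Minimality for a causal dependency relation. -/
def MinimalOf {α : Type} (le : α → α → Prop) (a : α) : Prop := ∀ a', le a' a → a' = a

/-- An arena: an event structure with polarities (`true` = Player `+`,
`false` = Opponent `−`) which is alternating, forestial and race-free. -/
structure Arena (α : Type) where
  le : α → α → Prop
  conflict : α → α → Prop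
  pol : α → Bool
  le_refl : ∀ e, le e e
  le_trans : ∀ {a b c : α}, le a b → le b c → le a c
  le_antisymm : ∀ {a b : α}, le a b → le b a → a = b
  finite_causes : ∀ e : α, Set.Finite {e' | le e' e}
  conflict_irrefl : ∀ e, ¬ conflict e e
  conflict_symm : ∀ {a b : α}, conflict a b → conflict b a
  conflict_inherit : ∀ {a b b' : α}, conflict a b → le b b' → conflict a b'
  alternating : ∀ {a b : α}, immOf le a b → pol a ≠ pol b
  forestial : ∀ {a1 a2 a : α}, le a1 a → le a2 a → le a1 a2 ∨ le a2 a1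
  race_free : ∀ {a1 a2 : α}, conflict a1 a2 →
    (∀ a1' a2', le a1' a1 → le a2' a2 → conflict a1' a2' → a1' = a1 ∧ a2' = a2) →
    pol a1 = pol a2

/-- An alternating play: every prefix reaches a configuration (valid), events are
pairwise distinct (non-repetitive), polarities alternate, and the first move (if
any) is negative. -/
def AltPlayOf {α : Type} (le conflict : α → α → Prop) (pol : α → Bool) (s : List α) : Prop :=
  (∀ t, t <+: s → ConfigOf le conflict {a | a ∈ t}) ∧
  s.Nodup ∧
  (∀ (i : ℕ) (a b : α), s[i]? = some a → s[i + 1]? = some b → pol a ≠ pol b) ∧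
  (∀ a : α, s[0]? = some a → pol a = false)

/-- Pointer data for a sequence of events: each non-minimal event `s_j` points to
an earlier occurrence `s_{p j}` of its immediate causal predecessor in the arena. -/
def IsPointerFor {α : Type} (A : Arena α) (s : List α) (p : ℕ → ℕ) : Prop :=
  ∀ (j : ℕ) (a : α), s[j]? = some a → ¬ MinimalOf A.le a →
    p j < j ∧ ∃ b, s[p j]? = some b ∧ immOf A.le b a

/-- An alternating sequence of events with a negative first move (the conditions of
a play with pointers that do not refer to validity). -/
def AltSeq {α : Type} (A : Arena α) (s : List α) : Prop :=
  (∀ (i : ℕ) (a b : α), s[i]? = some a → s[i + 1]? = some b → A.pol a ≠ A.pol b) ∧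
  (∀ a : α, s[0]? = some a → A.pol a = false)

/-! In a forestial arena a non-minimal event has exactly one immediate cause, so in a
non-repetitive play the pointer of a non-minimal occurrence is forced to be the unique position
of that cause, and validity of the prefix ending at the occurrence puts this position earlier.
Conversely, following pointers back from an occurrence visits, at earlier positions, every cause
of its event, so every prefix of a play with pointers is down-closed; without conflicts it is
then a configuration. -/

namespace Arena

variable {α : Type} (A : Arena α)

theorem exists_immOf_of_not_minimal {a : α} (ha : ¬ MinimalOf A.le a) :
    ∃ b, immOf A.le b a := by
  let _ : LE α := ⟨A.le⟩
  have : IsTrans α (· ≤ ·) := ⟨fun _ _ _ => A.le_trans⟩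
  have hne : {b | A.le b a ∧ b ≠ a}.Nonempty := by
    simpa [MinimalOf, Set.Nonempty] using ha
  obtain ⟨m, ⟨hma, hmne⟩, hmax⟩ :=
    ((A.finite_causes a).subset fun _ h => h.1).exists_maximal hne
  refine ⟨m, hma, hmne, fun c hmc hca => ?_⟩
  by_cases hc : c = a
  · exact Or.inr hc
  · exact Or.inl (A.le_antisymm (hmax ⟨hca, hc⟩ hmc) hmc)

variable {A}

theorem le_of_immOf_of_le {a b e : α} (hba : immOf A.le b a) (hea : A.le e a) (hne : e ≠ a) :
    A.le e b := by
  rcases A.forestial hea hba.1 with heb | hbe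
  · exact heb
  · rcases hba.2.2 e hbe hea with rfl | rfl
    · exact A.le_refl e
    · exact absurd rfl hne

theorem immOf_unique {a b b' : α} (hb : immOf A.le b a) (hb' : immOf A.le b' a) : b = b' :=
  A.le_antisymm (le_of_immOf_of_le hb' hb.1 hb.2.1) (le_of_immOf_of_le hb hb'.1 hb'.2.1)

end Arena

theorem List.mem_take_iff_exists_getElem? {α : Type} {s : List α} {n : ℕ} {e : α} :
    e ∈ s.take n ↔ ∃ i < n, s[i]? = some e := by
  simp only [List.mem_iff_getElem?, List.getElem?_take]
  constructor
  · rintro ⟨i, hi⟩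
    split_ifs at hi with hin
    exact ⟨i, hin, hi⟩
  · rintro ⟨i, hin, hi⟩
    exact ⟨i, by rwa [if_pos hin]⟩

section Plays

variable {α : Type} {A : Arena α} {s : List α} {p : ℕ → ℕ}

theorem AltPlayOf.exists_lt_getElem?_of_le (hs : AltPlayOf A.le A.conflict A.pol s) {j : ℕ}
    {a b : α} (ha : s[j]? = some a) (hba : A.le b a) (hne : b ≠ a) :
    ∃ i < j, s[i]? = some b := by
  have hat : a ∈ s.take (j + 1) := List.mem_take_iff_exists_getElem?.2 ⟨j, j.lt_succ_self, ha⟩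
  obtain ⟨i, hij, hib⟩ :=
    List.mem_take_iff_exists_getElem?.1 ((hs.1 _ (s.take_prefix _)).2.1 a hat b hba)
  refine ⟨i, lt_of_le_of_ne (Nat.lt_succ_iff.1 hij) ?_, hib⟩
  rintro rfl
  exact hne (Option.some.inj (hib.symm.trans ha))

theorem AltPlayOf.exists_isPointerFor (hs : AltPlayOf A.le A.conflict A.pol s) :
    ∃ p, IsPointerFor A s p := by
  have hpointer : ∀ j, ∃ i : ℕ, ∀ a, s[j]? = some a → ¬ MinimalOf A.le a →
      i < j ∧ ∃ b, s[i]? = some b ∧ immOf A.le b a := by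
    intro j
    by_cases h : ∃ a, s[j]? = some a ∧ ¬ MinimalOf A.le a
    · obtain ⟨a, ha, hmin⟩ := h
      obtain ⟨b, hba⟩ := A.exists_immOf_of_not_minimal hmin
      obtain ⟨i, hij, hib⟩ := hs.exists_lt_getElem?_of_le ha hba.1 hba.2.1
      refine ⟨i, fun a' ha' _ => ?_⟩
      obtain rfl : a = a' := Option.some.inj (ha.symm.trans ha')
      exact ⟨hij, b, hib, hba⟩
    · exact ⟨0, fun a ha hmin => (h ⟨a, ha, hmin⟩).elim⟩
  choose p hp using hpointer
  exact ⟨p, hp⟩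

theorem IsPointerFor.eq_of_nodup {p' : ℕ → ℕ} (hnodup : s.Nodup) (hp : IsPointerFor A s p)
    (hp' : IsPointerFor A s p') {j : ℕ} {a : α} (ha : s[j]? = some a)
    (hmin : ¬ MinimalOf A.le a) : p j = p' j := by
  obtain ⟨-, b, hb, hba⟩ := hp j a ha hmin
  obtain ⟨-, b', hb', hb'a⟩ := hp' j a ha hmin
  obtain rfl := Arena.immOf_unique hba hb'a
  exact (List.getElem?_inj (List.getElem?_eq_some_iff.1 hb).1 hnodup).1 (hb.trans hb'.symm)

theorem IsPointerFor.exists_le_getElem?_of_le (hp : IsPointerFor A s p) {j : ℕ} {a e : α}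
    (ha : s[j]? = some a) (hea : A.le e a) : ∃ i ≤ j, s[i]? = some e := by
  induction j using Nat.strong_induction_on generalizing a with
  | _ j ih =>
    by_cases hne : e = a
    · exact ⟨j, le_rfl, hne ▸ ha⟩
    · obtain ⟨hlt, b, hb, hba⟩ := hp j a ha fun hmin => hne (hmin e hea)
      obtain ⟨i, hi, hie⟩ := ih (p j) hlt hb (Arena.le_of_immOf_of_le hba hea hne)
      exact ⟨i, hi.trans hlt.le, hie⟩

theorem IsPointerFor.configOf_take (hconfree : ∀ a b : α, ¬ A.conflict a b)
    (hp : IsPointerFor A s p) (n : ℕ) : ConfigOf A.le A.conflict {a | a ∈ s.take n} := by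
  refine ⟨(s.take n).finite_toSet, fun a ha e hea => ?_, fun a _ b _ => hconfree a b⟩
  obtain ⟨j, hjn, hja⟩ := List.mem_take_iff_exists_getElem?.1 ha
  obtain ⟨i, hij, hie⟩ := hp.exists_le_getElem?_of_le hja hea
  exact List.mem_take_iff_exists_getElem?.2 ⟨i, hij.trans_lt hjn, hie⟩

theorem IsPointerFor.altPlayOf (hconfree : ∀ a b : α, ¬ A.conflict a b) (hseq : AltSeq A s)
    (hnodup : s.Nodup) (hp : IsPointerFor A s p) : AltPlayOf A.le A.conflict A.pol s := by
  refine ⟨fun t ht => ?_, hnodup, hseq⟩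
  rw [List.prefix_iff_eq_take.1 ht]
  exact hp.configOf_take hconfree _

end Plays

/-- On a conflict-free arena, non-repetitive alternating plays with pointers are in
bijection with alternating plays: every alternating play admits a pointer structure,
uniquely determined (on non-minimal occurrences) by the arena's immediate causality;
conversely, every alternating non-repetitive sequence equipped with valid pointers
is an alternating play. -/
theorem plays_with_pointers_bijection {α : Type} (A : Arena α)
    (hconfree : ∀ a b : α, ¬ A.conflict a b) :
    (∀ s : List α, AltPlayOf A.le A.conflict A.pol s →
      ((∃ p : ℕ → ℕ, IsPointerFor A s p) ∧
        ∀ p p' : ℕ → ℕ, IsPointerFor A s p → IsPointerFor A s p' →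
          ∀ (j : ℕ) (a : α), s[j]? = some a → ¬ MinimalOf A.le a → p j = p' j)) ∧
    (∀ (s : List α) (p : ℕ → ℕ), AltSeq A s → s.Nodup → IsPointerFor A s p →
      AltPlayOf A.le A.conflict A.pol s) := by
  refine ⟨fun s hs => ⟨hs.exists_isPointerFor, ?_⟩, fun s p hseq hnodup hp => ?_⟩
  · exact fun p p' hp hp' j a ha hmin => hp.eq_of_nodup hs.2.1 hp' ha hmin
  · exact hp.altPlayOf hconfree hseq hnodup
end

section
/- For a concrete arena A, the function 𝒫 mapping (symmetry classes of) alternating plays on A to alternating plays with pointers on the meager arena A⁰ is well-defined, injective, and preserves length and prefix. -/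
set_option autoImplicit false

/-- A set of pairs is the graph of a bijection between its domain and codomain. -/
def IsBijGraph {α : Type} (θ : Set (α × α)) : Prop :=
  ∀ p ∈ θ, ∀ q ∈ θ, ((p : α × α).1 = q.1 ↔ p.2 = q.2)

def symDom {α : Type} (θ : Set (α × α)) : Set α := Prod.fst '' θ

def symCod {α : Type} (θ : Set (α × α)) : Set α := Prod.snd '' θ

/-- An arena with symmetry: an alternating, forestial, race-free event structure
with polarities (`true` = Player `+`, `false` = Opponent `−`), equipped with an
isomorphism family `Sym` of (graphs of) polarity-preserving bijections between
configurations, closed under identities, inverse, composition, restriction and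
extension. -/
structure ArenaS (α : Type) where
  le : α → α → Prop
  conflict : α → α → Prop
  pol : α → Bool
  le_refl : ∀ e, le e e
  le_trans : ∀ {a b c : α}, le a b → le b c → le a c
  le_antisymm : ∀ {a b : α}, le a b → le b a → a = b
  finite_causes : ∀ e : α, Set.Finite {e' | le e' e}
  conflict_irrefl : ∀ e, ¬ conflict e e
  conflict_symm : ∀ {a b : α}, conflict a b → conflict b a
  conflict_inherit : ∀ {a b b' : α}, conflict a b → le b b' → conflict a b'
  alternating : ∀ {a b : α}, immOf le a b → pol a ≠ pol b
  forestial : ∀ {a1 a2 a : α}, le a1 a → le a2 a → le a1 a2 ∨ le a2 a1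
  race_free : ∀ {a1 a2 : α}, conflict a1 a2 →
    (∀ a1' a2', le a1' a1 → le a2' a2 → conflict a1' a2' → a1' = a1 ∧ a2' = a2) →
    pol a1 = pol a2
  Sym : Set (Set (α × α))
  sym_graph : ∀ θ ∈ Sym, IsBijGraph θ
  sym_dom : ∀ θ ∈ Sym, ConfigOf le conflict (symDom θ)
  sym_cod : ∀ θ ∈ Sym, ConfigOf le conflict (symCod θ)
  sym_pol : ∀ θ ∈ Sym, ∀ p ∈ θ, pol (p : α × α).1 = pol p.2
  sym_id : ∀ x : Set α, ConfigOf le conflict x → {p : α × α | p.1 ∈ x ∧ p.2 = p.1} ∈ Sym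
  sym_inv : ∀ θ ∈ Sym, Prod.swap '' θ ∈ Sym
  sym_comp : ∀ θ ∈ Sym, ∀ θ' ∈ Sym, symCod θ = symDom θ' →
    {p : α × α | ∃ b, (p.1, b) ∈ θ ∧ (b, p.2) ∈ θ'} ∈ Sym
  sym_restrict : ∀ θ ∈ Sym, ∀ x : Set α, ConfigOf le conflict x → x ⊆ symDom θ →
    ∃ θ' ∈ Sym, θ' ⊆ θ ∧ symDom θ' = x
  sym_ext : ∀ θ ∈ Sym, ∀ x : Set α, ConfigOf le conflict x → symDom θ ⊆ x →
    ∃ θ' ∈ Sym, θ ⊆ θ' ∧ symDom θ' = x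

/-- The pointwise pairing of the length-`k` prefixes of two sequences. -/
def pairingUpTo {α : Type} (s t : List α) (k : ℕ) : Set (α × α) :=
  {p | ∃ i < k, s[i]? = some p.1 ∧ t[i]? = some p.2}

/-- Two plays are symmetric when they have the same length and the pointwise
pairing of each pair of prefixes is a symmetry. -/
def PlaySymOf {α : Type} (Sym : Set (Set (α × α))) (s t : List α) : Prop :=
  s.length = t.length ∧ ∀ k ≤ s.length, pairingUpTo s t k ∈ Sym

/-- A meager arena: a forestial alternating partial order with polarities,
without conflict or symmetry. -/
structure Meager (β : Type) where
  le : β → β → Prop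
  pol : β → Bool
  le_refl : ∀ e, le e e
  le_trans : ∀ {a b c : β}, le a b → le b c → le a c
  le_antisymm : ∀ {a b : β}, le a b → le b a → a = b
  alternating : ∀ {a b : β}, immOf le a b → pol a ≠ pol b
  forestial : ∀ {a1 a2 a : β}, le a1 a → le a2 a → le a1 a2 ∨ le a2 a1

/-- A concrete arena `(A, A⁰, lbl)`: an arena with symmetry `A`, a meager arena
`M = A⁰`, and a polarity-preserving label function which is rigid (preserves
minimality and immediate causality), locally pointed, and transparent (a bijection
between configurations is a symmetry iff it is an order-isomorphism preserving
labels). -/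
structure Concrete (α β : Type) where
  A : ArenaS α
  M : Meager β
  lbl : α → β
  lbl_pol : ∀ a : α, M.pol (lbl a) = A.pol a
  locally_pointed : ∀ x : Set α, ConfigOf A.le A.conflict x → ∀ a ∈ x, ∀ a' ∈ x,
      MinimalOf A.le a → MinimalOf A.le a' → A.pol a = A.pol a' → a = a'
  rigid_min : ∀ a : α, MinimalOf A.le a → MinimalOf M.le (lbl a)
  rigid_imm : ∀ a b : α, immOf A.le a b → immOf M.le (lbl a) (lbl b)
  transparent : ∀ θ : Set (α × α), IsBijGraph θ →
      ConfigOf A.le A.conflict (symDom θ) → ConfigOf A.le A.conflict (symCod θ) →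
      (θ ∈ A.Sym ↔
        ((∀ p ∈ θ, ∀ q ∈ θ, (A.le (p : α × α).1 (q : α × α).1 ↔ A.le p.2 q.2)) ∧
          ∀ p ∈ θ, lbl (p : α × α).1 = lbl p.2))

-- The pointer annotation obtained from the arena's immediate causality: `ptrOf le
-- s j` is an index `i < j` carrying the immediate causal predecessor of `s_j`
-- (when one exists).
open Classical in
noncomputable def ptrOf {α : Type} (le : α → α → Prop) (s : List α) (j : ℕ) : ℕ :=
  if h : ∃ i, i < j ∧ ∃ a b, s[i]? = some a ∧ s[j]? = some b ∧ immOf le a b then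
    h.choose
  else 0

/-- Two plays have the same image under the pointer collapse `𝒫`: equal label
sequences, and equal pointers at every non-minimal occurrence. -/
def PImageEq {α β : Type} (C : Concrete α β) (s t : List α) : Prop :=
  s.map C.lbl = t.map C.lbl ∧
  ∀ (j : ℕ) (a : α), s[j]? = some a → ¬ MinimalOf C.A.le a →
    ptrOf C.A.le s j = ptrOf C.A.le t j

/-!
Transparency turns "being a symmetry" into "being a label-preserving order-isomorphism". In a
play, the pointer of a non-minimal move is the unique earlier occurrence of its immediate
predecessor: it exists because prefixes are down-closed and immediate predecessors exist by
finiteness of causes, and it is unique because the arena is a forest and plays do not repeat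
moves. Order-isomorphisms preserve immediate causality, so symmetric plays carry the same
pointers. Conversely, in a forest `a ≤ b` with `a ≠ b` forces `a ≤ pred b`, so the causal order
of a play is read off its pointer chains; two plays with the same labels and pointers therefore
pair up by a label-preserving order-isomorphism on every prefix, i.e. by a symmetry.
-/

lemma List.map_eq_map_iff_getElem? {α β : Type} {f : α → β} {s t : List α} :
    s.map f = t.map f ↔
      s.length = t.length ∧ ∀ (i : ℕ) (a b : α), s[i]? = some a → t[i]? = some b → f a = f b := by
  constructor
  · intro h
    refine ⟨by simpa using congrArg List.length h, fun i a b ha hb => ?_⟩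
    simpa [ha, hb] using congrArg (·[i]?) h
  · rintro ⟨hlen, h⟩
    refine List.ext_getElem (by simpa using hlen) fun i hs ht => ?_
    simp only [List.getElem_map]
    exact h i _ _ (List.getElem?_eq_getElem _) (List.getElem?_eq_getElem _)

lemma ptrOf_eq_of_immOf {α : Type} {le : α → α → Prop}
    (huniq : ∀ {p q a : α}, immOf le p a → immOf le q a → p = q)
    {s : List α} (hs : s.Nodup) {i j : ℕ} {p a : α} (hij : i < j) (hi : s[i]? = some p)
    (hj : s[j]? = some a) (hpa : immOf le p a) : ptrOf le s j = i := by
  have hex : ∃ i, i < j ∧ ∃ a b, s[i]? = some a ∧ s[j]? = some b ∧ immOf le a b :=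
    ⟨i, hij, p, a, hi, hj, hpa⟩
  obtain ⟨-, p', a', hi', hj', hpa'⟩ := hex.choose_spec
  rw [ptrOf, dif_pos hex]
  obtain rfl : a' = a := Option.some.inj (hj'.symm.trans hj)
  obtain rfl : p' = p := huniq hpa' hpa
  exact (List.getElem?_inj (List.getElem?_eq_some_iff.mp hi').1 hs).mp (hi'.trans hi.symm)

section Pairing

variable {α : Type} {s t : List α}

lemma isBijGraph_pairingUpTo (hs : s.Nodup) (ht : t.Nodup) (k : ℕ) :
    IsBijGraph (pairingUpTo s t k) := by
  rintro ⟨a, b⟩ ⟨i, -, ha, hb⟩ ⟨a', b'⟩ ⟨i', -, ha', hb'⟩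
  dsimp only
  constructor
  · rintro rfl
    obtain rfl :=
      (List.getElem?_inj (List.getElem?_eq_some_iff.mp ha).1 hs).mp (ha.trans ha'.symm)
    exact Option.some.inj (hb.symm.trans hb')
  · rintro rfl
    obtain rfl :=
      (List.getElem?_inj (List.getElem?_eq_some_iff.mp hb).1 ht).mp (hb.trans hb'.symm)
    exact Option.some.inj (ha.symm.trans ha')

lemma symDom_pairingUpTo {k : ℕ} (hk : k ≤ t.length) :
    symDom (pairingUpTo s t k) = {a | a ∈ s.take k} := by
  ext a
  simp only [symDom, pairingUpTo, Set.mem_image, Set.mem_ofPred_eq, List.mem_iff_getElem?,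
    List.getElem?_take]
  constructor
  · rintro ⟨⟨a, b⟩, ⟨i, hik, ha, -⟩, rfl⟩
    exact ⟨i, by simpa [hik] using ha⟩
  · rintro ⟨i, hi⟩
    split_ifs at hi with hik
    exact ⟨(a, t[i]), ⟨i, hik, hi, List.getElem?_eq_getElem _⟩, rfl⟩

lemma symCod_pairingUpTo {k : ℕ} (hk : k ≤ s.length) :
    symCod (pairingUpTo s t k) = {b | b ∈ t.take k} := by
  ext b
  simp only [symCod, pairingUpTo, Set.mem_image, Set.mem_ofPred_eq, List.mem_iff_getElem?,
    List.getElem?_take]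
  constructor
  · rintro ⟨⟨a, b⟩, ⟨i, hik, -, hb⟩, rfl⟩
    exact ⟨i, by simpa [hik] using hb⟩
  · rintro ⟨i, hi⟩
    split_ifs at hi with hik
    exact ⟨(s[i], b), ⟨i, hik, List.getElem?_eq_getElem _, hi⟩, rfl⟩

end Pairing

namespace ArenaS

variable {α : Type} (A : ArenaS α)

lemma le_of_le_of_immOf {a b p : α} (hab : A.le a b) (hne : a ≠ b) (hpb : immOf A.le p b) :
    A.le a p := by
  rcases A.forestial hab hpb.1 with h | h
  · exact h
  · rcases hpb.2.2 a h hab with rfl | rfl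
    · exact A.le_refl a
    · exact absurd rfl hne

lemma immOf_unique {p q a : α} (hp : immOf A.le p a) (hq : immOf A.le q a) : p = q :=
  A.le_antisymm (A.le_of_le_of_immOf hp.1 hp.2.1 hq) (A.le_of_le_of_immOf hq.1 hq.2.1 hp)

lemma exists_immOf_of_not_minimal {a : α} (ha : ¬ MinimalOf A.le a) : ∃ p, immOf A.le p a := by
  let _ : LE α := ⟨A.le⟩
  have : IsTrans α (· ≤ ·) := ⟨fun _ _ _ => A.le_trans⟩
  have hfin : {e | A.le e a ∧ e ≠ a}.Finite := (A.finite_causes a).subset fun e he => he.1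
  have hne : {e | A.le e a ∧ e ≠ a}.Nonempty := by
    simpa [MinimalOf, Set.Nonempty] using ha
  obtain ⟨p, ⟨hpa, hpne⟩, hmax⟩ := hfin.exists_maximal hne
  refine ⟨p, hpa, hpne, fun c hpc hca => ?_⟩
  by_cases hc : c = a
  · exact Or.inr hc
  · exact Or.inl (A.le_antisymm (hmax ⟨hca, hc⟩ hpc) hpc)

variable {A} {s : List α}

lemma exists_index_of_le (hs : AltPlayOf A.le A.conflict A.pol s) {j : ℕ} {a b : α}
    (hj : s[j]? = some b) (hab : A.le a b) : ∃ i ≤ j, s[i]? = some a := by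
  have hb : b ∈ s.take (j + 1) :=
    List.mem_iff_getElem?.mpr ⟨j, by rwa [List.getElem?_take_of_lt (Nat.lt_succ_self j)]⟩
  obtain ⟨i, hi⟩ := List.mem_iff_getElem?.mp ((hs.1 _ (List.take_prefix _ _)).2.1 b hb a hab)
  rw [List.getElem?_take] at hi
  split_ifs at hi with hij
  exact ⟨i, Nat.lt_succ_iff.mp hij, hi⟩

lemma ptrOf_spec (hs : AltPlayOf A.le A.conflict A.pol s) {j : ℕ} {a : α}
    (hj : s[j]? = some a) (ha : ¬ MinimalOf A.le a) :
    ptrOf A.le s j < j ∧ ∃ p, s[ptrOf A.le s j]? = some p ∧ immOf A.le p a := by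
  obtain ⟨p, hpa⟩ := A.exists_immOf_of_not_minimal ha
  obtain ⟨i, hij, hi⟩ := exists_index_of_le hs hj hpa.1
  have hlt : i < j := lt_of_le_of_ne hij <| by
    rintro rfl
    exact hpa.2.1 (Option.some.inj (hi.symm.trans hj))
  rw [ptrOf_eq_of_immOf A.immOf_unique hs.2.1 hlt hi hj hpa]
  exact ⟨hlt, p, hi, hpa⟩

lemma ptrOf_eq_of_isPrefix {t : List α} (ht : AltPlayOf A.le A.conflict A.pol t) (h : s <+: t)
    {j : ℕ} {a : α} (hj : s[j]? = some a) (ha : ¬ MinimalOf A.le a) :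
    ptrOf A.le s j = ptrOf A.le t j := by
  obtain ⟨r, rfl⟩ := h
  have hjs := (List.getElem?_eq_some_iff.mp hj).1
  obtain ⟨hlt, p, hp, hpa⟩ := ptrOf_spec ht (by rwa [List.getElem?_append_left hjs]) ha
  rw [List.getElem?_append_left (hlt.trans hjs)] at hp
  exact ptrOf_eq_of_immOf A.immOf_unique (List.nodup_append.mp ht.2.1).1 hlt hp hj hpa

end ArenaS

namespace Concrete

variable {α β : Type} (C : Concrete α β)

lemma minimalOf_lbl_iff {a : α} : MinimalOf C.M.le (C.lbl a) ↔ MinimalOf C.A.le a := by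
  refine ⟨fun h => by_contra fun ha => ?_, C.rigid_min a⟩
  obtain ⟨p, hpa⟩ := C.A.exists_immOf_of_not_minimal ha
  have hpa' := C.rigid_imm p a hpa
  exact hpa'.2.1 (h _ hpa'.1)

lemma minimalOf_iff_of_lbl_eq {a b : α} (h : C.lbl a = C.lbl b) :
    MinimalOf C.A.le a ↔ MinimalOf C.A.le b := by
  rw [← C.minimalOf_lbl_iff, h, C.minimalOf_lbl_iff]

variable {C} {θ : Set (α × α)}

lemma le_iff_of_mem_sym (hθ : θ ∈ C.A.Sym) {a b a' b' : α} (ha : (a, a') ∈ θ)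
    (hb : (b, b') ∈ θ) : C.A.le a b ↔ C.A.le a' b' :=
  ((C.transparent θ (C.A.sym_graph θ hθ) (C.A.sym_dom θ hθ) (C.A.sym_cod θ hθ)).mp hθ).1
    _ ha _ hb

lemma lbl_eq_of_mem_sym (hθ : θ ∈ C.A.Sym) {a a' : α} (ha : (a, a') ∈ θ) :
    C.lbl a = C.lbl a' :=
  ((C.transparent θ (C.A.sym_graph θ hθ) (C.A.sym_dom θ hθ) (C.A.sym_cod θ hθ)).mp hθ).2
    _ ha

lemma immOf_of_mem_sym (hθ : θ ∈ C.A.Sym) {p a p' a' : α} (hp : (p, p') ∈ θ)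
    (ha : (a, a') ∈ θ) (hpa : immOf C.A.le p a) : immOf C.A.le p' a' := by
  have hbij := C.A.sym_graph θ hθ
  refine ⟨(le_iff_of_mem_sym hθ hp ha).mp hpa.1, fun h => hpa.2.1 ((hbij _ hp _ ha).mpr h),
    fun c hpc hca => ?_⟩
  -- the codomain of `θ` is down-closed
  obtain ⟨⟨c₀, c₁⟩, hc, rfl⟩ := (C.A.sym_cod θ hθ).2.1 a' ⟨_, ha, rfl⟩ c hca
  rcases hpa.2.2 c₀ ((le_iff_of_mem_sym hθ hp hc).mpr hpc)
      ((le_iff_of_mem_sym hθ hc ha).mpr hca) with rfl | rfl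
  · exact Or.inl ((hbij _ hc _ hp).mp rfl)
  · exact Or.inr ((hbij _ hc _ ha).mp rfl)

variable {s t : List α}

lemma pImageEq_of_playSymOf (hs : AltPlayOf C.A.le C.A.conflict C.A.pol s) (ht : t.Nodup)
    (h : PlaySymOf C.A.Sym s t) : PImageEq C s t := by
  obtain ⟨hlen, hsym⟩ := h
  have hθ := hsym s.length le_rfl
  have hpair : ∀ {i : ℕ} {a b : α}, s[i]? = some a → t[i]? = some b →
      (a, b) ∈ pairingUpTo s t s.length :=
    fun ha hb => ⟨_, (List.getElem?_eq_some_iff.mp ha).1, ha, hb⟩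
  refine ⟨List.map_eq_map_iff_getElem?.mpr
    ⟨hlen, fun i a b ha hb => lbl_eq_of_mem_sym hθ (hpair ha hb)⟩, fun j a hj ha => ?_⟩
  obtain ⟨hlt, p, hp, hpa⟩ := ArenaS.ptrOf_spec hs hj ha
  have hjs := (List.getElem?_eq_some_iff.mp hj).1
  have hb : t[j]? = some t[j] := List.getElem?_eq_getElem (by omega)
  have hq : t[ptrOf C.A.le s j]? = some t[ptrOf C.A.le s j] :=
    List.getElem?_eq_getElem (by omega)
  exact (ptrOf_eq_of_immOf C.A.immOf_unique ht hlt hq hb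
    (immOf_of_mem_sym hθ (hpair hp hq) (hpair hj hb) hpa)).symm

lemma map_lbl_alternating (hs : AltPlayOf C.A.le C.A.conflict C.A.pol s) (i : ℕ) (b b' : β)
    (hb : (s.map C.lbl)[i]? = some b) (hb' : (s.map C.lbl)[i + 1]? = some b') :
    C.M.pol b ≠ C.M.pol b' := by
  simp only [List.getElem?_map, Option.map_eq_some_iff] at hb hb'
  obtain ⟨a, ha, rfl⟩ := hb
  obtain ⟨a', ha', rfl⟩ := hb'
  rw [C.lbl_pol, C.lbl_pol]
  exact hs.2.2.1 i a a' ha ha'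

lemma map_lbl_head_negative (hs : AltPlayOf C.A.le C.A.conflict C.A.pol s) (b : β)
    (hb : (s.map C.lbl)[0]? = some b) : C.M.pol b = false := by
  simp only [List.getElem?_map, Option.map_eq_some_iff] at hb
  obtain ⟨a, ha, rfl⟩ := hb
  rw [C.lbl_pol]
  exact hs.2.2.2 a ha

lemma ptrOf_spec_map_lbl (hs : AltPlayOf C.A.le C.A.conflict C.A.pol s) {j : ℕ} {b : β}
    (hj : (s.map C.lbl)[j]? = some b) (hb : ¬ MinimalOf C.M.le b) :
    ptrOf C.A.le s j < j ∧
      ∃ b', (s.map C.lbl)[ptrOf C.A.le s j]? = some b' ∧ immOf C.M.le b' b := by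
  simp only [List.getElem?_map, Option.map_eq_some_iff] at hj
  obtain ⟨a, ha, rfl⟩ := hj
  obtain ⟨hlt, p, hp, hpa⟩ := ArenaS.ptrOf_spec hs ha (mt (C.rigid_min a) hb)
  exact ⟨hlt, C.lbl p, by simp [hp], C.rigid_imm p a hpa⟩

lemma _root_.PImageEq.symm (h : PImageEq C s t) : PImageEq C t s := by
  obtain ⟨hlen, hlbl⟩ := List.map_eq_map_iff_getElem?.mp h.1
  refine ⟨h.1.symm, fun j b hj hb => ?_⟩
  have hjt := (List.getElem?_eq_some_iff.mp hj).1
  have ha : s[j]? = some s[j] := List.getElem?_eq_getElem (by omega)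
  exact (h.2 j _ ha (by rwa [C.minimalOf_iff_of_lbl_eq (hlbl j _ _ ha hj)])).symm

/-- Induction along the pointer chain of the later move: a strict cause of a move lies below
its immediate predecessor. -/
lemma le_of_pImageEq (hs : AltPlayOf C.A.le C.A.conflict C.A.pol s)
    (ht : AltPlayOf C.A.le C.A.conflict C.A.pol t) (h : PImageEq C s t) (j : ℕ) :
    ∀ (i : ℕ) (a b a' b' : α), s[i]? = some a → s[j]? = some b → t[i]? = some a' →
      t[j]? = some b' → C.A.le a b → C.A.le a' b' := by
  induction j using Nat.strong_induction_on with
  | _ j ih =>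
  intro i a b a' b' ha hb ha' hb' hab
  by_cases hne : a = b
  · subst hne
    obtain rfl := (List.getElem?_inj (List.getElem?_eq_some_iff.mp ha).1 hs.2.1).mp
      (ha.trans hb.symm)
    obtain rfl := Option.some.inj (ha'.symm.trans hb')
    exact C.A.le_refl a'
  have hb_min : ¬ MinimalOf C.A.le b := fun hb_min => hne (hb_min a hab)
  have hb'_min : ¬ MinimalOf C.A.le b' := by
    rwa [← C.minimalOf_iff_of_lbl_eq
      ((List.map_eq_map_iff_getElem?.mp h.1).2 j b b' hb hb')]
  obtain ⟨hlt, p, hp, hpb⟩ := ArenaS.ptrOf_spec hs hb hb_min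
  obtain ⟨-, p', hp', hpb'⟩ := ArenaS.ptrOf_spec ht hb' hb'_min
  rw [← h.2 j b hb hb_min] at hp'
  exact C.A.le_trans (ih _ hlt i a p a' p' ha hp ha' hp' (C.A.le_of_le_of_immOf hab hne hpb))
    hpb'.1

lemma pairingUpTo_mem_sym (hs : AltPlayOf C.A.le C.A.conflict C.A.pol s)
    (ht : AltPlayOf C.A.le C.A.conflict C.A.pol t) (hlen : s.length = t.length) {k : ℕ}
    (hk : k ≤ s.length)
    (hle : ∀ (i j : ℕ) (a b a' b' : α), s[i]? = some a → s[j]? = some b → t[i]? = some a' →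
      t[j]? = some b' → (C.A.le a b ↔ C.A.le a' b'))
    (hlbl : ∀ (i : ℕ) (a a' : α), s[i]? = some a → t[i]? = some a' → C.lbl a = C.lbl a') :
    pairingUpTo s t k ∈ C.A.Sym := by
  refine (C.transparent _ (isBijGraph_pairingUpTo hs.2.1 ht.2.1 k) ?_ ?_).mpr ⟨?_, ?_⟩
  · rw [symDom_pairingUpTo (hlen ▸ hk)]
    exact hs.1 _ (List.take_prefix _ _)
  · rw [symCod_pairingUpTo hk]
    exact ht.1 _ (List.take_prefix _ _)
  · rintro ⟨a, a'⟩ ⟨i, -, ha, ha'⟩ ⟨b, b'⟩ ⟨j, -, hb, hb'⟩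
    exact hle i j a b a' b' ha hb ha' hb'
  · rintro ⟨a, a'⟩ ⟨i, -, ha, ha'⟩
    exact hlbl i a a' ha ha'

lemma playSymOf_of_pImageEq (hs : AltPlayOf C.A.le C.A.conflict C.A.pol s)
    (ht : AltPlayOf C.A.le C.A.conflict C.A.pol t) (h : PImageEq C s t) :
    PlaySymOf C.A.Sym s t := by
  obtain ⟨hlen, hlbl⟩ := List.map_eq_map_iff_getElem?.mp h.1
  refine ⟨hlen, fun k hk => pairingUpTo_mem_sym hs ht hlen hk
    (fun i j a b a' b' ha hb ha' hb' => ⟨?_, ?_⟩) hlbl⟩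
  · exact le_of_pImageEq hs ht h j i a b a' b' ha hb ha' hb'
  · exact le_of_pImageEq ht hs h.symm j i a' b' a b ha' hb' ha hb

end Concrete

/-- For a concrete arena, the function `𝒫` mapping (symmetry classes of)
alternating plays on `A` to alternating plays with pointers on the meager arena
`A⁰` is well-defined (symmetric plays have the same image, and the image is a
play with pointers on `A⁰`), injective, and preserves length and prefix. -/
theorem pointer_collapse_wellDefined_injective {α β : Type} (C : Concrete α β) :
    -- well-defined on symmetry classes
    (∀ s t : List α, AltPlayOf C.A.le C.A.conflict C.A.pol s →
        AltPlayOf C.A.le C.A.conflict C.A.pol t →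
        PlaySymOf C.A.Sym s t → PImageEq C s t) ∧
    -- the image is an alternating play with pointers on the meager arena A⁰
    (∀ s : List α, AltPlayOf C.A.le C.A.conflict C.A.pol s →
        ((∀ (i : ℕ) (a b : β), (s.map C.lbl)[i]? = some a →
            (s.map C.lbl)[i + 1]? = some b → C.M.pol a ≠ C.M.pol b) ∧
         (∀ a : β, (s.map C.lbl)[0]? = some a → C.M.pol a = false) ∧
         (∀ (j : ℕ) (b : β), (s.map C.lbl)[j]? = some b → ¬ MinimalOf C.M.le b →
            ptrOf C.A.le s j < j ∧
              ∃ b' : β, (s.map C.lbl)[ptrOf C.A.le s j]? = some b' ∧ immOf C.M.le b' b))) ∧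
    -- injectivity on symmetry classes
    (∀ s t : List α, AltPlayOf C.A.le C.A.conflict C.A.pol s →
        AltPlayOf C.A.le C.A.conflict C.A.pol t →
        PImageEq C s t → PlaySymOf C.A.Sym s t) ∧
    -- preserves length
    (∀ s : List α, (s.map C.lbl).length = s.length) ∧
    -- preserves prefix
    (∀ s t : List α, AltPlayOf C.A.le C.A.conflict C.A.pol t → s <+: t →
        (s.map C.lbl <+: t.map C.lbl ∧
          ∀ (j : ℕ) (a : α), s[j]? = some a → ¬ MinimalOf C.A.le a →
            ptrOf C.A.le s j = ptrOf C.A.le t j)) :=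
  ⟨fun _ _ hs ht h => Concrete.pImageEq_of_playSymOf hs ht.2.1 h,
    fun _ hs => ⟨Concrete.map_lbl_alternating hs, Concrete.map_lbl_head_negative hs,
      fun _ _ => Concrete.ptrOf_spec_map_lbl hs⟩,
    fun _ _ hs ht h => Concrete.playSymOf_of_pImageEq hs ht h,
    fun s => s.length_map C.lbl,
    fun _ _ ht h => ⟨h.map C.lbl, fun _ _ hj ha => ArenaS.ptrOf_eq_of_isPrefix ht h hj ha⟩⟩
end

section
/- Two deterministic innocent alternating strategies σ and τ on an arena A are equal if and only if their sets of P-views are equal: ⌈σ⌉ = ⌈τ⌉ iff σ = τ. -/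
set_option autoImplicit false

/-- The P-view relation: `PViewRelOf le pol s v` holds when `v = ⌈s⌉`, following
the inductive clauses `⌈ε⌉ = ε`, `⌈s a⁺⌉ = ⌈s⌉ a⁺`, `⌈s a1⁺ s' a2⁻⌉ = ⌈s⌉ a1 a2`
when `a1 ⋗ a2`, and `⌈t a2⁻⌉ = a2` when `a2` is negative minimal. -/
inductive PViewRelOf {α : Type} (le : α → α → Prop) (pol : α → Bool) :
    List α → List α → Prop
  | nil : PViewRelOf le pol [] []
  | pos {s v : List α} {a : α} : pol a = true → PViewRelOf le pol s v →
      PViewRelOf le pol (s ++ [a]) (v ++ [a])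
  | negMin {t : List α} {a : α} : pol a = false → MinimalOf le a →
      PViewRelOf le pol (t ++ [a]) [a]
  | neg {s s' v : List α} {a1 a2 : α} : pol a1 = true → pol a2 = false →
      immOf le a1 a2 → PViewRelOf le pol (s ++ [a1]) v →
      PViewRelOf le pol (s ++ a1 :: s' ++ [a2]) (v ++ [a2])

/-- An alternating prestrategy: non-empty, prefix-closed, deterministic set of
alternating plays. -/
def PrestratOf {α : Type} (le conflict : α → α → Prop) (pol : α → Bool)
    (σ : Set (List α)) : Prop :=
  ([] ∈ σ) ∧ (∀ s t : List α, s <+: t → t ∈ σ → s ∈ σ) ∧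
  (∀ s ∈ σ, AltPlayOf le conflict pol s) ∧
  (∀ (s : List α) (a b : α), pol a = true → pol b = true →
      s ++ [a] ∈ σ → s ++ [b] ∈ σ → a = b)

/-- An alternating strategy: a prestrategy which is moreover receptive. -/
def StrategyOf {α : Type} (le conflict : α → α → Prop) (pol : α → Bool)
    (σ : Set (List α)) : Prop :=
  PrestratOf le conflict pol σ ∧
  ∀ (s : List α) (a : α), s ∈ σ → pol a = false →
    AltPlayOf le conflict pol (s ++ [a]) → s ++ [a] ∈ σ

/-- P-visibility: P-views of all prefixes of plays of `σ` are plays. -/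
def PVisibleOf {α : Type} (le conflict : α → α → Prop) (pol : α → Bool)
    (σ : Set (List α)) : Prop :=
  ∀ s ∈ σ, ∀ t v : List α, t <+: s → PViewRelOf le pol t v →
    AltPlayOf le conflict pol v

/-- Innocence: a P-visible strategy whose behaviour depends only on the P-view. -/
def InnocentOf {α : Type} (le conflict : α → α → Prop) (pol : α → Bool)
    (σ : Set (List α)) : Prop :=
  PVisibleOf le conflict pol σ ∧
  ∀ (s t v : List α) (a : α), pol a = true → s ++ [a] ∈ σ → t ∈ σ →
    PViewRelOf le pol s v → PViewRelOf le pol t v → t ++ [a] ∈ σ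

/-- The set of P-views of a strategy. -/
def pviews {α : Type} (le : α → α → Prop) (pol : α → Bool) (σ : Set (List α)) :
    Set (List α) :=
  {v | ∃ s ∈ σ, PViewRelOf le pol s v}


section Aux
variable {α : Type}

lemma altplay_prefix {le conflict : α → α → Prop} {pol : α → Bool} {s t : List α}
    (h : AltPlayOf le conflict pol s) (hpre : t <+: s) :
    AltPlayOf le conflict pol t := by
  obtain ⟨h1, h2, h3, h4⟩ := h
  obtain ⟨u, rfl⟩ := hpre
  refine ⟨fun w hw => h1 w (hw.trans (List.prefix_append _ _)),
    h2.sublist (List.sublist_append_left _ _), ?_, ?_⟩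
  · intro i a b ha hb
    have hib : i + 1 < t.length := by
      by_contra hc
      simp [List.getElem?_eq_none (le_of_not_gt hc)] at hb
    apply h3 i a b
    · rw [List.getElem?_append, if_pos (by omega)]; exact ha
    · rw [List.getElem?_append, if_pos hib]; exact hb
  · intro a ha
    have h0 : 0 < t.length := by
      by_contra hc
      simp [List.getElem?_eq_none (le_of_not_gt hc)] at ha
    apply h4
    rw [List.getElem?_append, if_pos h0]; exact ha

lemma exists_max_below (A : Arena α) (a : α) (S : Finset α)
    (hS : ∀ b ∈ S, A.le b a) (hne : S.Nonempty) :
    ∃ a1 ∈ S, ∀ c ∈ S, A.le a1 c → c = a1 := by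
  classical
  induction S using Finset.induction with
  | empty => exact absurd hne (by simp)
  | @insert b S hb ih =>
    rcases S.eq_empty_or_nonempty with rfl | hSne
    · refine ⟨b, by simp, ?_⟩
      intro c hc _; simpa using hc
    · obtain ⟨a1, ha1, hmax⟩ := ih (fun x hx => hS x (Finset.mem_insert_of_mem hx)) hSne
      by_cases hba1 : A.le b a1
      · refine ⟨a1, Finset.mem_insert_of_mem ha1, ?_⟩
        intro c hc hlc
        rcases Finset.mem_insert.mp hc with rfl | hc
        · exact A.le_antisymm hba1 hlc
        · exact hmax c hc hlc
      · have h1 : A.le a1 b := by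
          rcases A.forestial (hS b (Finset.mem_insert_self b S))
            (hS a1 (Finset.mem_insert_of_mem ha1)) with h | h
          · exact absurd h hba1
          · exact h
        refine ⟨b, Finset.mem_insert_self b S, ?_⟩
        intro c hc hlc
        rcases Finset.mem_insert.mp hc with rfl | hc
        · rfl
        · exact absurd (hmax c hc (A.le_trans h1 hlc) ▸ hlc) hba1

lemma exists_pview (A : Arena α) :
    ∀ (n : ℕ) (s : List α), s.length ≤ n →
      AltPlayOf A.le A.conflict A.pol s → ∃ v, PViewRelOf A.le A.pol s v := by
  classical
  intro n
  induction n with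
  | zero =>
    intro s hs _
    rw [Nat.le_zero, List.length_eq_zero_iff] at hs
    subst hs
    exact ⟨[], PViewRelOf.nil⟩
  | succ n ih =>
    intro s hs hplay
    rcases List.eq_nil_or_concat s with rfl | ⟨t, a, heq⟩
    · exact ⟨[], PViewRelOf.nil⟩
    · rw [List.concat_eq_append] at heq
      subst heq
      have hlt : t.length ≤ n := by simp at hs; omega
      have htplay : AltPlayOf A.le A.conflict A.pol t :=
        altplay_prefix hplay (List.prefix_append _ _)
      cases hpa : A.pol a with
      | true =>
        obtain ⟨v, hv⟩ := ih t hlt htplay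
        exact ⟨v ++ [a], PViewRelOf.pos hpa hv⟩
      | false =>
        by_cases hmin : MinimalOf A.le a
        · exact ⟨[a], PViewRelOf.negMin hpa hmin⟩
        · -- find immediate predecessor
          simp only [MinimalOf, not_forall] at hmin
          obtain ⟨a', ha'le, ha'ne⟩ := hmin
          set S : Finset α := (A.finite_causes a).toFinset.erase a with hSdef
          have hmemS : ∀ b, b ∈ S ↔ A.le b a ∧ b ≠ a := by
            intro b
            simp [hSdef, Finset.mem_erase, Set.Finite.mem_toFinset, and_comm]
          obtain ⟨a1, ha1S, hmax⟩ := exists_max_below A a S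
            (fun b hb => ((hmemS b).mp hb).1) ⟨a', (hmemS a').mpr ⟨ha'le, ha'ne⟩⟩
          obtain ⟨ha1le, ha1ne⟩ := (hmemS a1).mp ha1S
          have himm : immOf A.le a1 a := by
            refine ⟨ha1le, ha1ne, ?_⟩
            intro c hc1 hca
            by_cases hceq : c = a
            · exact Or.inr hceq
            · exact Or.inl (hmax c ((hmemS c).mpr ⟨hca, hceq⟩) hc1)
          have hpa1 : A.pol a1 = true := by
            have := A.alternating himm
            rw [hpa] at this
            simpa using this
          -- a1 is in t
          have hconf : ConfigOf A.le A.conflict {x | x ∈ t ++ [a]} :=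
            hplay.1 _ (List.prefix_refl _)
          have ha1mem : a1 ∈ t ++ [a] := hconf.2.1 a (by simp) a1 ha1le
          have ha1t : a1 ∈ t := by
            rcases List.mem_append.mp ha1mem with h | h
            · exact h
            · simp at h; exact absurd h ha1ne
          obtain ⟨s'', s', rfl⟩ := List.append_of_mem ha1t
          have hpre : s'' ++ [a1] <+: (s'' ++ a1 :: s') ++ [a] := by
            refine ⟨s' ++ [a], by simp⟩
          have hlen : (s'' ++ [a1]).length ≤ n := by
            have := hlt; simp at this ⊢; omega
          obtain ⟨v, hv⟩ := ih (s'' ++ [a1]) hlen (altplay_prefix hplay hpre)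
          refine ⟨v ++ [a], ?_⟩
          have := PViewRelOf.neg (s' := s') hpa1 hpa himm hv
          simpa using this

lemma pview_pos_inv {le : α → α → Prop} {pol : α → Bool} {t w v : List α} {a : α}
    (h : PViewRelOf le pol t w) (hw : w = v ++ [a]) (hpa : pol a = true) :
    ∃ t', t = t' ++ [a] ∧ PViewRelOf le pol t' v := by
  cases h with
  | nil => exact absurd hw.symm (by simp)
  | pos hp hv =>
    obtain ⟨h1, h2⟩ := List.append_inj' hw rfl
    cases List.cons.inj h2 |>.1
    subst h1
    exact ⟨_, rfl, hv⟩
  | negMin hp hmin =>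
    have : a ∈ v ++ [a] := by simp
    rw [← hw] at this
    simp at this
    rw [this, hp] at hpa
    exact absurd hpa (by simp)
  | neg hp1 hp2 himm hv =>
    obtain ⟨h1, h2⟩ := List.append_inj' hw rfl
    cases List.cons.inj h2 |>.1
    rw [hp2] at hpa; exact absurd hpa (by simp)

lemma strat_subset (A : Arena α) (σ τ : Set (List α))
    (hσ : StrategyOf A.le A.conflict A.pol σ)
    (hτ : StrategyOf A.le A.conflict A.pol τ)
    (hτi : InnocentOf A.le A.conflict A.pol τ)
    (hpv : pviews A.le A.pol σ = pviews A.le A.pol τ) :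
    σ ⊆ τ := by
  intro s hs
  induction s using List.reverseRecOn with
  | nil => exact hτ.1.1
  | append_singleton t a ih =>
    have htσ : t ∈ σ := hσ.1.2.1 t _ (List.prefix_append _ _) hs
    have htτ : t ∈ τ := ih htσ
    cases hpa : A.pol a with
    | false =>
      exact hτ.2 t a htτ hpa (hσ.1.2.2.1 _ hs)
    | true =>
      obtain ⟨v, hv⟩ := exists_pview A t.length t le_rfl (hσ.1.2.2.1 t htσ)
      have hvview : v ++ [a] ∈ pviews A.le A.pol σ :=
        ⟨t ++ [a], hs, PViewRelOf.pos hpa hv⟩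
      rw [hpv] at hvview
      obtain ⟨u, huτ, huview⟩ := hvview
      obtain ⟨u', rfl, hu'⟩ := pview_pos_inv huview rfl hpa
      have hu'τ : u' ∈ τ := hτ.1.2.1 u' _ (List.prefix_append _ _) huτ
      exact hτi.2 u' t v a hpa huτ htτ hu' hv

end Aux

/-- Two deterministic innocent alternating strategies on an arena are equal if and
only if their sets of P-views are equal: `⌈σ⌉ = ⌈τ⌉` iff `σ = τ`. -/
theorem innocent_determined_by_pviews {α : Type} (A : Arena α) (σ τ : Set (List α))
    (hσ : StrategyOf A.le A.conflict A.pol σ)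
    (hτ : StrategyOf A.le A.conflict A.pol τ)
    (hσi : InnocentOf A.le A.conflict A.pol σ)
    (hτi : InnocentOf A.le A.conflict A.pol τ) :
    pviews A.le A.pol σ = pviews A.le A.pol τ ↔ σ = τ := by
  constructor
  · intro hpv
    exact Set.Subset.antisymm (strat_subset A σ τ hσ hτ hτi hpv)
      (strat_subset A τ σ hτ hσ hσi hpv.symm)
  · rintro rfl
    rfl
end

section
/- Every complete alternating play (well-bracketed in the weak non-alternating sense, P-visible, O-visible, with every question answered) is well-bracketed in the strong sense: every answer answers the pending question at the time it is played. -/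
set_option autoImplicit false

/-- An arena with a Question/Answer labeling (`qa a = true` means `a` is a
Question): questions open (minimal events are questions), answers close (answers
are maximal), and distinct answers to the same question are in conflict. -/
structure QArena (α : Type) where
  le : α → α → Prop
  conflict : α → α → Prop
  pol : α → Bool
  qa : α → Bool
  le_refl : ∀ e, le e e
  le_trans : ∀ {a b c : α}, le a b → le b c → le a c
  le_antisymm : ∀ {a b : α}, le a b → le b a → a = b
  finite_causes : ∀ e : α, Set.Finite {e' | le e' e}
  conflict_irrefl : ∀ e, ¬ conflict e e
  conflict_symm : ∀ {a b : α}, conflict a b → conflict b a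
  conflict_inherit : ∀ {a b b' : α}, conflict a b → le b b' → conflict a b'
  alternating : ∀ {a b : α}, immOf le a b → pol a ≠ pol b
  forestial : ∀ {a1 a2 a : α}, le a1 a → le a2 a → le a1 a2 ∨ le a2 a1
  race_free : ∀ {a1 a2 : α}, conflict a1 a2 →
    (∀ a1' a2', le a1' a1 → le a2' a2 → conflict a1' a2' → a1' = a1 ∧ a2' = a2) →
    pol a1 = pol a2
  question_opening : ∀ a : α, MinimalOf le a → qa a = true
  answer_closing : ∀ a : α, qa a = false → ∀ b, le a b → b = a
  answer_linear : ∀ q a1 a2 : α, qa a1 = false → qa a2 = false →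
    immOf le q a1 → immOf le q a2 → a1 = a2 ∨ conflict a1 a2

/-- The O-view relation, dual to the P-view: Opponent moves extend the view and
positive moves reset it to their justifier's view. -/
inductive OViewRelOf {α : Type} (le : α → α → Prop) (pol : α → Bool) :
    List α → List α → Prop
  | nil : OViewRelOf le pol [] []
  | neg {s v : List α} {a : α} : pol a = false → OViewRelOf le pol s v →
      OViewRelOf le pol (s ++ [a]) (v ++ [a])
  | pos {s s' v : List α} {a1 a2 : α} : pol a1 = false → pol a2 = true →
      immOf le a1 a2 → OViewRelOf le pol (s ++ [a1]) v →
      OViewRelOf le pol (s ++ a1 :: s' ++ [a2]) (v ++ [a2])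

/-- `a` answers question `q`: `a` is an answer whose justifier (immediate causal
predecessor in the arena) is `q`. -/
def AnswersOf {α : Type} (le : α → α → Prop) (qa : α → Bool) (q a : α) : Prop :=
  qa a = false ∧ immOf le q a

/-- Question `q` is answered within the sequence `t`. -/
def AnsweredIn {α : Type} (le : α → α → Prop) (qa : α → Bool) (q : α) (t : List α) :
    Prop :=
  ∃ a ∈ t, AnswersOf le qa q a

/-- `q` is the pending question of `t`: the last question occurrence of `t` that is
unanswered in `t`. -/
def PendingIn {α : Type} (le : α → α → Prop) (qa : α → Bool) (t : List α) (q : α) :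
    Prop :=
  ∃ i : ℕ, t[i]? = some q ∧ qa q = true ∧ ¬ AnsweredIn le qa q t ∧
    ∀ (j : ℕ) (q' : α), i < j → t[j]? = some q' → qa q' = true → AnsweredIn le qa q' t

/-- Strong (alternating) well-bracketing of a play: every answer answers the
pending question at the time it is played. -/
def WBPlayOf {α : Type} (le : α → α → Prop) (qa : α → Bool) (s : List α) : Prop :=
  ∀ (t : List α) (a : α), t ++ [a] <+: s → qa a = false →
    ∃ q, PendingIn le qa t q ∧ immOf le q a

/-- A well-bracketed strategy: it is never the first to break the call-stack
discipline (every positive extension of a well-bracketed play is well-bracketed). -/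
def WBStrategyOf {α : Type} (le : α → α → Prop) (qa : α → Bool) (pol : α → Bool)
    (σ : Set (List α)) : Prop :=
  ∀ (s : List α) (a : α), pol a = true → s ++ [a] ∈ σ →
    WBPlayOf le qa s → WBPlayOf le qa (s ++ [a])

/-- Weak (non-alternating) well-bracketing of a play, via the `fork` and `wait`
conditions: a question may justify a move only while unanswered (`fork`), and it
may only be answered once all the questions it justified are answered (`wait`). -/
def WeakWBOf {α : Type} (le : α → α → Prop) (qa : α → Bool) (s : List α) : Prop :=
  (∀ (t : List α) (m : α), t ++ [m] <+: s → ∀ q ∈ t, qa q = true → immOf le q m →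
      ¬ AnsweredIn le qa q t) ∧
  (∀ (t : List α) (a : α), t ++ [a] <+: s → qa a = false → ∀ q : α, immOf le q a →
      ∀ q' ∈ t, qa q' = true → immOf le q q' → AnsweredIn le qa q' t)

/-! Let `a` be an answer with justifier `q`. If a question `q'` played strictly between `q` and
`a` were still open when `a` is played, completeness would force it to be answered later, by a
move pointing strictly inside the segment from `q` to `a`. Visibility forbids this. Justifiers
lie in the view, and since nothing points to `a`, the view of a later prefix, read backwards,
reaches `a` only by stepping back from the move right after it; alternation then makes the view
jump from `a` straight to `q`, so it never enters the segment. -/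

namespace List

variable {α : Type} {s w : List α} {x : α}

theorem IsPrefix.getElem?_length_of_concat (h : w ++ [x] <+: s) : s[w.length]? = some x := by
  obtain ⟨r, rfl⟩ := h
  simp

theorem IsPrefix.idxOf_of_concat [DecidableEq α] (h : w ++ [x] <+: s) (hnd : s.Nodup) :
    s.idxOf x = w.length := by
  have hx : x ∉ w := ((List.nodup_concat w x).1 (by simpa using h.nodup hnd)).1
  rw [← h.idxOf_eq_of_mem (by simp), idxOf_append_of_notMem hx]
  simp

theorem IsPrefix.idxOf_lt_idxOf_of_notMem [DecidableEq α] (h : w ++ [x] <+: s) (hnd : s.Nodup)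
    {y : α} (hyw : y ∉ w ++ [x]) : s.idxOf x < s.idxOf y := by
  rw [h.idxOf_of_concat hnd]
  have := (h.mem_iff_idxOf_lt_length y).not.1 hyw
  simp at this
  omega

theorem Nodup.idxOf_of_getElem? [DecidableEq α] (hnd : s.Nodup) {i : ℕ} (h : s[i]? = some x) :
    s.idxOf x = i := by
  obtain ⟨hi, rfl⟩ := getElem?_eq_some_iff.1 h
  exact hnd.idxOf_getElem i hi

end List

theorem ConfigOf.mem_of_immOf_concat {α : Type} {le conflict : α → α → Prop} {w : List α}
    {d x : α} (hc : ConfigOf le conflict {a | a ∈ w ++ [x]}) (h : immOf le d x) : d ∈ w := by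
  have hd : d ∈ w ++ [x] := hc.2.1 x (by simp) d h.1
  simpa [h.2.1] using hd

namespace QArena

variable {α : Type} (Q : QArena α) {q q' a x : α}

theorem exists_immOf (ha : ¬ MinimalOf Q.le a) : ∃ d, immOf Q.le d a := by
  let : Preorder α :=
    { le := Q.le, le_refl := Q.le_refl, le_trans := fun _ _ _ => Q.le_trans }
  obtain ⟨d, hda, hne⟩ : ∃ d, Q.le d a ∧ d ≠ a := by simpa [MinimalOf] using ha
  have hfin : {e | Q.le e a ∧ e ≠ a}.Finite := (Q.finite_causes a).subset fun _ h => h.1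
  obtain ⟨m, ⟨hma, hmne⟩, hmax⟩ := hfin.exists_maximal ⟨d, hda, hne⟩
  refine ⟨m, hma, hmne, fun c hmc hca => ?_⟩
  by_cases hc : c = a
  · exact .inr hc
  · exact .inl (Q.le_antisymm (hmax ⟨hca, hc⟩ hmc) hmc)

theorem immOf_unique (h : immOf Q.le q a) (h' : immOf Q.le q' a) : q = q' := by
  rcases Q.forestial h.1 h'.1 with hle | hle
  · exact ((h.2.2 q' hle h'.1).resolve_right h'.2.1).symm
  · exact (h'.2.2 q hle h.1).resolve_right h.2.1

theorem not_immOf_of_answer (ha : Q.qa a = false) : ¬ immOf Q.le a x :=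
  fun hx => hx.2.1 (Q.answer_closing a ha x hx.1).symm

theorem qa_eq_true_of_immOf (h : immOf Q.le q a) : Q.qa q = true := by
  by_contra hq
  exact Q.not_immOf_of_answer (by simpa using hq) h

theorem exists_immOf_mem {w : List α} (hc : ConfigOf Q.le Q.conflict {a | a ∈ w ++ [x]})
    (hx : ¬ MinimalOf Q.le x) : ∃ d ∈ w, immOf Q.le d x :=
  (Q.exists_immOf hx).imp fun _ hd => ⟨hc.mem_of_immOf_concat hd, hd⟩

end QArena

section Views

variable {α : Type} {le : α → α → Prop} {pol : α → Bool} {u v : List α}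

theorem PViewRelOf.subset (h : PViewRelOf le pol u v) : v ⊆ u := by
  induction h with
  | nil => simp
  | pos _ _ ih =>
    intro x hx
    simp only [List.mem_append] at hx ⊢
    exact hx.imp_left (@ih x)
  | negMin => simp
  | neg _ _ _ _ ih =>
    intro x hx
    simp only [List.mem_append, List.mem_cons] at hx ⊢
    have := @ih x
    simp only [List.mem_append, List.mem_singleton] at this
    tauto

theorem OViewRelOf.pviewRelOf_not (h : OViewRelOf le pol u v) :
    PViewRelOf le (fun x => !pol x) u v := by
  induction h with
  | nil => exact .nil
  | neg hp _ ih => exact .pos (by simpa using hp) ih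
  | pos hp₁ hp₂ himm _ ih => exact .neg (by simpa using hp₁) (by simpa using hp₂) himm ih

variable (Q : QArena α) {s : List α}

theorem exists_pviewRelOf (hconf : ∀ t, t <+: s → ConfigOf Q.le Q.conflict {a | a ∈ t})
    {u : List α} (hu : u <+: s) : ∃ v, PViewRelOf Q.le Q.pol u v := by
  induction hn : u.length using Nat.strong_induction_on generalizing u with
  | _ n ih =>
  rcases List.eq_nil_or_concat u with rfl | ⟨w, x, rfl⟩
  · exact ⟨[], .nil⟩
  rw [List.concat_eq_append] at hu hn ⊢
  cases hpol : Q.pol x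
  · by_cases hmin : MinimalOf Q.le x
    · exact ⟨[x], .negMin hpol hmin⟩
    obtain ⟨d, hd, hdx⟩ := Q.exists_immOf_mem (hconf _ hu) hmin
    obtain ⟨w₀, w₁, rfl⟩ := List.append_of_mem hd
    have hdpol : Q.pol d = true := by simpa [hpol] using Q.alternating hdx
    obtain ⟨v, hv⟩ := ih (w₀.length + 1) (by simp at hn; omega)
      ((List.prefix_append (w₀ ++ [d]) (w₁ ++ [x])).trans (by simpa using hu)) (by simp)
    exact ⟨v ++ [x], .neg (s' := w₁) hdpol hpol hdx hv⟩
  · obtain ⟨v, hv⟩ :=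
      ih w.length (by simp at hn; omega) ((List.prefix_append _ _).trans hu) rfl
    exact ⟨v ++ [x], .pos hpol hv⟩

theorem exists_oviewRelOf (hneg : ∀ a : α, MinimalOf Q.le a → Q.pol a = false)
    (hconf : ∀ t, t <+: s → ConfigOf Q.le Q.conflict {a | a ∈ t})
    {u : List α} (hu : u <+: s) : ∃ v, OViewRelOf Q.le Q.pol u v := by
  induction hn : u.length using Nat.strong_induction_on generalizing u with
  | _ n ih =>
  rcases List.eq_nil_or_concat u with rfl | ⟨w, x, rfl⟩
  · exact ⟨[], .nil⟩
  rw [List.concat_eq_append] at hu hn ⊢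
  cases hpol : Q.pol x
  · obtain ⟨v, hv⟩ :=
      ih w.length (by simp at hn; omega) ((List.prefix_append _ _).trans hu) rfl
    exact ⟨v ++ [x], .neg hpol hv⟩
  · have hmin : ¬ MinimalOf Q.le x := fun hmin => by simp [hneg x hmin] at hpol
    obtain ⟨d, hd, hdx⟩ := Q.exists_immOf_mem (hconf _ hu) hmin
    obtain ⟨w₀, w₁, rfl⟩ := List.append_of_mem hd
    have hdpol : Q.pol d = false := by simpa [hpol] using Q.alternating hdx
    obtain ⟨v, hv⟩ := ih (w₀.length + 1) (by simp at hn; omega)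
      ((List.prefix_append (w₀ ++ [d]) (w₁ ++ [x])).trans (by simpa using hu)) (by simp)
    exact ⟨v ++ [x], .pos (s' := w₁) hdpol hpol hdx hv⟩

end Views

section Segment

variable {α : Type} [DecidableEq α] {s : List α} {q a : α}

theorem pol_ne_of_idxOf_succ {pol : α → Bool}
    (halt : ∀ (i : ℕ) (b c : α), s[i]? = some b → s[i + 1]? = some c → pol b ≠ pol c)
    (ha : a ∈ s) {w : List α} {x : α} (hwx : w ++ [x] <+: s) (hw : w.length = s.idxOf a + 1) :
    pol a ≠ pol x :=
  halt _ a x (List.getElem?_idxOf ha) (hw ▸ hwx.getElem?_length_of_concat)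

theorem PViewRelOf.idxOf_not_mem_segment {le : α → α → Prop} {pol : α → Bool}
    (hnd : s.Nodup) (ha : a ∈ s)
    (halt : ∀ (i : ℕ) (b c : α), s[i]? = some b → s[i + 1]? = some c → pol b ≠ pol c)
    {u v : List α} (hv : PViewRelOf le pol u v) (hu : u <+: s) (hau : s.idxOf a < u.length)
    (hlast : u.length = s.idxOf a + 1 → pol a = false)
    (hjust : ∀ y ∈ u, s.idxOf a ≤ s.idxOf y → ∀ d ∈ u, immOf le d y →
      s.idxOf d ≤ s.idxOf q ∨ s.idxOf a < s.idxOf d) :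
    ∀ x ∈ v, s.idxOf x ≤ s.idxOf q ∨ s.idxOf a ≤ s.idxOf x := by
  induction hv with
  | nil => simp at hau
  | @pos w v' b hb hv' ih =>
    have hb_idx := hu.idxOf_of_concat hnd
    simp only [List.length_append, List.length_singleton] at hau hlast
    intro x hx
    rcases List.mem_append.1 hx with hx | hx
    · have hlt : s.idxOf a < w.length := by
        refine lt_of_le_of_ne (Nat.lt_succ_iff.1 hau) fun h => ?_
        have hba : b = a := (List.idxOf_inj (hu.mem (by simp))).1 (hb_idx.trans h.symm)
        simp [hba, hlast (by omega)] at hb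
      refine ih ((List.prefix_append _ _).trans hu) hlt (fun h => ?_)
        (fun y hy hay d hd => hjust y (by simp [hy]) hay d (by simp [hd])) x hx
      simpa [hb] using pol_ne_of_idxOf_succ halt ha hu h
    · rw [List.mem_singleton.1 hx, hb_idx]
      omega
  | @negMin w b _ _ =>
    intro x hx
    rw [List.mem_singleton.1 hx, hu.idxOf_of_concat hnd]
    simp at hau
    omega
  | @neg w w' v' a₁ a₂ _ _ himm hv' ih =>
    have hpre : w ++ [a₁] <+: s := (List.prefix_append _ (w' ++ [a₂])).trans (by simpa using hu)
    have ha₁_idx := hpre.idxOf_of_concat hnd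
    have ha₂_idx := hu.idxOf_of_concat hnd
    simp at hau ha₂_idx
    intro x hx
    rcases List.mem_append.1 hx with hx | hx
    · rcases hjust a₂ (by simp) (by omega) a₁ (by simp) himm with h | h
      · have := (hpre.mem_iff_idxOf_lt_length x).1 (hv'.subset hx)
        simp at this
        omega
      · refine ih hpre (by simp; omega) (fun h => by simp at h; omega)
          (fun y hy hay d hd => hjust y ?_ hay d ?_) x hx
        · simp at hy ⊢; tauto
        · simp at hd ⊢; tauto
    · rw [List.mem_singleton.1 hx, ha₂_idx]
      omega

theorem idxOf_justifier_not_mem_segment (Q : QArena α)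
    (hneg : ∀ a : α, MinimalOf Q.le a → Q.pol a = false)
    (hplay : AltPlayOf Q.le Q.conflict Q.pol s)
    (hP : ∀ t v : List α, t <+: s → PViewRelOf Q.le Q.pol t v →
        AltPlayOf Q.le Q.conflict Q.pol v)
    (hO : ∀ t v : List α, t <+: s → OViewRelOf Q.le Q.pol t v →
        AltPlayOf Q.le Q.conflict Q.pol v)
    (ha : a ∈ s) (hqa : immOf Q.le q a) (hleaf : ∀ x ∈ s, ¬ immOf Q.le a x) :
    ∀ x ∈ s, s.idxOf a < s.idxOf x → ∀ d, immOf Q.le d x →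
      s.idxOf d ≤ s.idxOf q ∨ s.idxOf a < s.idxOf d := by
  obtain ⟨hconf, hnd, halt, -⟩ := hplay
  intro x hx
  induction hk : s.idxOf x using Nat.strong_induction_on generalizing x with
  | _ k ih =>
  intro hax d hdx
  obtain ⟨w, r, hs⟩ := List.append_of_mem hx
  have hwx : w ++ [x] <+: s := ⟨r, by simp [hs]⟩
  have hw : w <+: s := (List.prefix_append _ _).trans hwx
  have hkw : k = w.length := hk ▸ hwx.idxOf_of_concat hnd
  have hjust : ∀ y ∈ w, s.idxOf a ≤ s.idxOf y → ∀ d ∈ w, immOf Q.le d y →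
      s.idxOf d ≤ s.idxOf q ∨ s.idxOf a < s.idxOf d := by
    intro y hy hay d _ hdy
    rcases hay.lt_or_eq with hay | hay
    · exact ih _ (hkw ▸ (hw.mem_iff_idxOf_lt_length y).1 hy) y (hw.mem hy) rfl hay d hdy
    · obtain rfl : y = a := (List.idxOf_inj (hw.mem hy)).1 hay.symm
      exact .inl (Q.immOf_unique hdy hqa ▸ le_rfl)
  -- an O-view for `Q.pol` is a P-view for `!Q.pol`, so one avoidance lemma serves both cases
  obtain ⟨pol, halt', hxpol, v, hv, hdv⟩ : ∃ pol : α → Bool,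
      (∀ (i : ℕ) (b c : α), s[i]? = some b → s[i + 1]? = some c → pol b ≠ pol c) ∧
      pol x = true ∧ ∃ v, PViewRelOf Q.le pol w v ∧ d ∈ v := by
    cases hpol : Q.pol x
    · obtain ⟨v, hv⟩ := exists_oviewRelOf Q hneg hconf hw
      refine ⟨fun y => !Q.pol y, fun i b c hb hc => by simpa using halt i b c hb hc,
        by simp [hpol], v, hv.pviewRelOf_not, ?_⟩
      exact ((hO _ _ hwx (.neg hpol hv)).1 _ List.prefix_rfl).mem_of_immOf_concat hdx
    · obtain ⟨v, hv⟩ := exists_pviewRelOf Q hconf hw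
      exact ⟨Q.pol, halt, hpol, v, hv,
        ((hP _ _ hwx (.pos hpol hv)).1 _ List.prefix_rfl).mem_of_immOf_concat hdx⟩
  have hlast : w.length = s.idxOf a + 1 → pol a = false := fun h => by
    simpa [hxpol] using pol_ne_of_idxOf_succ halt' ha hwx h
  rcases hv.idxOf_not_mem_segment hnd ha halt' hw (by omega) hlast hjust d hdv with h | h
  · exact .inl h
  · refine .inr (lt_of_le_of_ne h fun had => hleaf x hx ?_)
    rwa [(List.idxOf_inj (hw.mem (hv.subset hdv))).1 had.symm] at hdx

end Segment

/-- Every complete alternating play on a negative arena — well-bracketed in the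
weak non-alternating sense, P-visible, O-visible, and with every question
answered — is well-bracketed in the strong sense: every answer answers the pending
question at the time it is played. -/
theorem complete_implies_strong_wellBracketing {α : Type} (Q : QArena α)
    (hneg : ∀ a : α, MinimalOf Q.le a → Q.pol a = false)
    (s : List α)
    (hplay : AltPlayOf Q.le Q.conflict Q.pol s)
    (hweak : WeakWBOf Q.le Q.qa s)
    (hP : ∀ t v : List α, t <+: s → PViewRelOf Q.le Q.pol t v →
        AltPlayOf Q.le Q.conflict Q.pol v)
    (hO : ∀ t v : List α, t <+: s → OViewRelOf Q.le Q.pol t v →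
        AltPlayOf Q.le Q.conflict Q.pol v)
    (hcomplete : ∀ q ∈ s, Q.qa q = true → AnsweredIn Q.le Q.qa q s) :
    WBPlayOf Q.le Q.qa s := by
  classical
  intro t a hta ha
  have hnd := hplay.2.1
  have ht : t <+: s := (List.prefix_append _ _).trans hta
  obtain ⟨q, hqa⟩ := Q.exists_immOf fun hmin => by simp [Q.question_opening a hmin] at ha
  have hqt : q ∈ t := (hplay.1 _ hta).mem_of_immOf_concat hqa
  have hq := Q.qa_eq_true_of_immOf hqa
  refine ⟨q, ⟨t.idxOf q, List.getElem?_idxOf hqt, hq, hweak.1 t a hta q hqt hq hqa, ?_⟩,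
    hqa⟩
  intro j q' hj hq'j hq'
  by_contra hunanswered
  have hq't : q' ∈ t := List.mem_of_getElem? hq'j
  obtain ⟨b, hb, hbqa, hq'b⟩ := hcomplete q' (ht.mem hq't) hq'
  have hidx_q := ht.idxOf_eq_of_mem hqt
  have hidx_q' := ht.idxOf_eq_of_mem hq't
  have hj_q' := (ht.nodup hnd).idxOf_of_getElem? hq'j
  have hidx_a := hta.idxOf_of_concat hnd
  have hb_after : s.idxOf a < s.idxOf b := by
    have hbt : b ∉ t := fun hbt => hunanswered ⟨b, hbt, hbqa, hq'b⟩
    have hba : b ≠ a := by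
      rintro rfl
      obtain rfl : q' = q := Q.immOf_unique hq'b hqa
      omega
    exact hta.idxOf_lt_idxOf_of_notMem hnd (by simp [hbt, hba])
  have := idxOf_justifier_not_mem_segment Q hneg hplay hP hO
    (hta.mem (List.mem_concat_self ..)) hqa (fun x _ => Q.not_immOf_of_answer ha)
    b hb hb_after q' hq'b
  have := (List.getElem?_eq_some_iff.1 hq'j).1
  omega
end

section
/- For a causal strategy σ on an arena A (a map of event structures ∂ : σ → A that is receptive and courteous), every immediate causal link m ⋗_σ n with n negative satisfies ∂(m) ⋗_A ∂(n); conversely, if m and n⁻ are compatible events of σ with ∂(m) ⋗_A ∂(n), then m ⋗_σ n. -/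
set_option autoImplicit false

/-- A causal strategy on an arena `A`: an event structure of strategy events with a
display map `dsp` to the arena which is a map of event structures (preserves
configurations, locally injective), is negative (minimal events display to
negative moves), courteous (immediate causal links with positive source or
negative target are sent to immediate causal links of `A`), and receptive (every
negative extension of the display of a configuration is witnessed by a unique
extension of the configuration). Polarities of strategy events are inherited
through `dsp`. -/
structure CausalStrategy {α : Type} (A : Arena α) (β : Type) where
  le : β → β → Prop
  conflict : β → β → Prop
  le_refl : ∀ e, le e e
  le_trans : ∀ {a b c : β}, le a b → le b c → le a c
  le_antisymm : ∀ {a b : β}, le a b → le b a → a = b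
  finite_causes : ∀ e : β, Set.Finite {e' | le e' e}
  conflict_irrefl : ∀ e, ¬ conflict e e
  conflict_symm : ∀ {a b : β}, conflict a b → conflict b a
  conflict_inherit : ∀ {a b b' : β}, conflict a b → le b b' → conflict a b'
  dsp : β → α
  dsp_config : ∀ x : Set β, ConfigOf le conflict x → ConfigOf A.le A.conflict (dsp '' x)
  dsp_locInj : ∀ x : Set β, ConfigOf le conflict x →
      ∀ e1 ∈ x, ∀ e2 ∈ x, dsp e1 = dsp e2 → e1 = e2
  negative : ∀ m : β, MinimalOf le m → A.pol (dsp m) = false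
  courteous : ∀ m n : β, immOf le m n →
      (A.pol (dsp m) = true ∨ A.pol (dsp n) = false) → immOf A.le (dsp m) (dsp n)
  receptive : ∀ x : Set β, ConfigOf le conflict x → ∀ a : α, A.pol a = false →
      a ∉ dsp '' x → ConfigOf A.le A.conflict (insert a (dsp '' x)) →
      ∃! m : β, m ∉ x ∧ ConfigOf le conflict (insert m x) ∧ dsp m = a


/-!
Courtesy already covers links with a negative target. For the converse, local injectivity on
the configuration `[n]` of causes of `n` reflects `∂m ≤ ∂n` to `m ≤ n`. If some `c` lay
strictly between `m` and `n`, take an immediate predecessor `p` of `n` above `c`: courtesy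
makes `∂p ⋗ ∂n`, and in the forest `A` an event has at most one immediate predecessor, so
`∂p = ∂m`, whence `p = m` by local injectivity and `c = m`.
-/

namespace Arena

variable {α : Type} (A : Arena α)

theorem eq_of_immOf_of_immOf {a b n : α} (ha : immOf A.le a n) (hb : immOf A.le b n) :
    a = b := by
  rcases A.forestial ha.1 hb.1 with hab | hba
  · exact (ha.2.2 b hab hb.1).resolve_right hb.2.1 |>.symm
  · exact (hb.2.2 a hba ha.1).resolve_right ha.2.1

end Arena

namespace CausalStrategy

variable {α β : Type} {A : Arena α} (S : CausalStrategy A β)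

abbrev toPartialOrder : PartialOrder β where
  le := S.le
  le_refl := S.le_refl
  le_trans _ _ _ := S.le_trans
  le_antisymm _ _ := S.le_antisymm

theorem exists_le_immOf {c n : β} (hcn : S.le c n) (hne : c ≠ n) :
    ∃ p, S.le c p ∧ immOf S.le p n := by
  let := S.toPartialOrder
  have hfin : {e | c ≤ e ∧ e < n}.Finite :=
    (S.finite_causes n).subset fun e he => he.2.le
  obtain ⟨p, ⟨hcp, hpn⟩, hmax⟩ := hfin.exists_maximal ⟨c, le_rfl, lt_of_le_of_ne hcn hne⟩
  refine ⟨p, hcp, hpn.le, hpn.ne, fun d hpd hdn => ?_⟩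
  rcases eq_or_lt_of_le (show d ≤ n from hdn) with hd | hd
  · exact Or.inr hd
  · exact Or.inl ((hmax ⟨hcp.trans hpd, hd⟩ hpd).antisymm hpd)

theorem configOf_causes {x : Set β} (hx : ConfigOf S.le S.conflict x) {n : β} (hn : n ∈ x) :
    ConfigOf S.le S.conflict {e | S.le e n} :=
  ⟨S.finite_causes n, fun _ he _ he' => S.le_trans he' he,
    fun e he e' he' => hx.2.2 e (hx.2.1 n hn e he) e' (hx.2.1 n hn e' he')⟩

theorem le_of_dsp_le {x : Set β} (hx : ConfigOf S.le S.conflict x) {m n : β} (hm : m ∈ x)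
    (hn : n ∈ x) (h : A.le (S.dsp m) (S.dsp n)) : S.le m n := by
  have hcauses := S.configOf_causes hx hn
  obtain ⟨e, hen, he⟩ :=
    (S.dsp_config _ hcauses).2.1 (S.dsp n) ⟨n, S.le_refl n, rfl⟩ (S.dsp m) h
  obtain rfl : e = m := S.dsp_locInj x hx e (hx.2.1 n hn e hen) m hm he
  exact hen

theorem immOf_of_dsp_immOf {x : Set β} (hx : ConfigOf S.le S.conflict x) {m n : β}
    (hm : m ∈ x) (hn : n ∈ x) (hneg : A.pol (S.dsp n) = false)
    (h : immOf A.le (S.dsp m) (S.dsp n)) : immOf S.le m n := by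
  refine ⟨S.le_of_dsp_le hx hm hn h.1, fun hmn => h.2.1 (congrArg S.dsp hmn), ?_⟩
  intro c hmc hcn
  by_cases hc : c = n
  · exact Or.inr hc
  obtain ⟨p, hcp, hpn⟩ := S.exists_le_immOf hcn hc
  have hdsp : S.dsp p = S.dsp m := A.eq_of_immOf_of_immOf (S.courteous p n hpn (Or.inr hneg)) h
  obtain rfl : p = m := S.dsp_locInj x hx p (hx.2.1 n hn p hpn.1) m hm hdsp
  exact Or.inl (S.le_antisymm hcp hmc)

end CausalStrategy

/-- For a causal strategy `σ` on an arena `A`: every immediate causal link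
`m ⋗_σ n` with `n` negative displays to an immediate causal link
`∂(m) ⋗_A ∂(n)`; conversely, if `m` and `n⁻` are compatible events of `σ`
(they lie in a common configuration) with `∂(m) ⋗_A ∂(n)`, then `m ⋗_σ n`. -/
theorem courtesy_and_its_converse {α β : Type} (A : Arena α) (S : CausalStrategy A β) :
    (∀ m n : β, immOf S.le m n → A.pol (S.dsp n) = false →
      immOf A.le (S.dsp m) (S.dsp n)) ∧
    (∀ m n : β, A.pol (S.dsp n) = false →
      (∃ x : Set β, ConfigOf S.le S.conflict x ∧ m ∈ x ∧ n ∈ x) →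
      immOf A.le (S.dsp m) (S.dsp n) → immOf S.le m n) :=
  ⟨fun m n h hneg => S.courteous m n h (Or.inr hneg),
    fun _ _ hneg ⟨_, hx, hm, hn⟩ h => S.immOf_of_dsp_immOf hx hm hn hneg h⟩
end

section
/- If σ is a causal strategy on an arena A and m1, m2 are two negative events of σ in minimal conflict, then their displays ∂(m1) and ∂(m2) are in minimal conflict in A. -/
set_option autoImplicit false

/-- A minimal conflict: a conflicting pair not inherited from a conflict between
causal predecessors. -/
def MinConflictOf {γ : Type} (le conflict : γ → γ → Prop) (a b : γ) : Prop :=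
  conflict a b ∧ ∀ a' b', le a' a → le b' b → conflict a' b' → a' = a ∧ b' = b

/-!
Let `x = [m1) ∪ [m2)` be the union of the strict pasts of `m1` and `m2`. Minimality of the
conflict makes `x`, `x ∪ {m1}` and `x ∪ {m2}` configurations, and their displays show at once
that any conflict below `∂ m1, ∂ m2` can only be between `∂ m1` and `∂ m2` themselves.
If these two did not conflict, `∂(x ∪ {m1}) ∪ {∂ m2}` would be a configuration of `A`, and
receptivity would extend `x ∪ {m1}` by a negative event `m` displayed as `∂ m2`. Courtesy sends
the immediate causes of `m` to immediate causes of `∂ m2`, which are displays of events of `x`;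
by local injectivity `m` does not depend on `m1`, so `m` already extends `x`, and uniqueness in
receptivity forces `m = m2`, contradicting the consistency of `x ∪ {m1, m}`.
-/

section EventStructure

def IsDownClosed {γ : Type} (le : γ → γ → Prop) (x : Set γ) : Prop :=
  ∀ e ∈ x, ∀ e', le e' e → e' ∈ x

variable {γ : Type} {le conflict : γ → γ → Prop} {x y : Set γ} {a b : γ}

theorem IsDownClosed.union (hx : IsDownClosed le x) (hy : IsDownClosed le y) :
    IsDownClosed le (x ∪ y) := by
  rintro e (he | he) e' hle
  exacts [.inl (hx e he e' hle), .inr (hy e he e' hle)]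

theorem IsDownClosed.insert (hx : IsDownClosed le x) (ha : ∀ e, le e a → e = a ∨ e ∈ x) :
    IsDownClosed le (insert a x) := by
  rintro e (rfl | he) e' hle
  exacts [ha e' hle, .inr (hx e he e' hle)]

theorem ConfigOf.of_subset (hy : ConfigOf le conflict y) (hxy : x ⊆ y)
    (hx : IsDownClosed le x) : ConfigOf le conflict x :=
  ⟨hy.1.subset hxy, hx, fun e he e' he' => hy.2.2 e (hxy he) e' (hxy he')⟩

theorem ConfigOf.insert_insert (ha : ConfigOf le conflict (insert a x))
    (hb : ConfigOf le conflict (insert b x)) (hab : ¬ conflict a b) (hba : ¬ conflict b a) :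
    ConfigOf le conflict (insert b (insert a x)) := by
  refine ⟨ha.1.insert b, IsDownClosed.insert ha.2.1 fun e he => ?_, ?_⟩
  · rcases hb.2.1 b (.inl rfl) e he with rfl | he
    exacts [.inl rfl, .inr (.inr he)]
  · rintro e (rfl | he) e' (rfl | he') hc
    · exact hb.2.2 _ (.inl rfl) _ (.inl rfl) hc
    · rcases he' with rfl | he'
      exacts [hba hc, hb.2.2 e (.inl rfl) e' (.inr he') hc]
    · rcases he with rfl | he
      exacts [hab hc, hb.2.2 e (.inr he) e' (.inl rfl) hc]
    · exact ha.2.2 e he e' he' hc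

theorem minConflictOf_of_config_insert (ha : ConfigOf le conflict (insert a x))
    (hb : ConfigOf le conflict (insert b x)) (hab : conflict a b) :
    MinConflictOf le conflict a b := by
  refine ⟨hab, fun a' b' ha' hb' hc => ?_⟩
  have ha'' := ha.2.1 a (.inl rfl) a' ha'
  have hb'' := hb.2.1 b (.inl rfl) b' hb'
  exact ⟨ha''.resolve_right fun hx => hb.2.2 a' (.inr hx) b' hb'' hc,
    hb''.resolve_right fun hx => ha.2.2 a' ha'' b' (.inr hx) hc⟩

end EventStructure

namespace CausalStrategy

variable {α β : Type} {A : Arena α} (S : CausalStrategy A β)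

def strictCauses (e : β) : Set β := {e' | S.le e' e ∧ e' ≠ e}

theorem isDownClosed_strictCauses (e : β) : IsDownClosed S.le (S.strictCauses e) :=
  fun _ he _ hle => ⟨S.le_trans hle he.1, fun h => he.2 (S.le_antisymm he.1 (h ▸ hle))⟩

theorem eq_or_mem_strictCauses {e e' : β} (h : S.le e' e) : e' = e ∨ e' ∈ S.strictCauses e :=
  (eq_or_ne e' e).imp_right fun hne => ⟨h, hne⟩

theorem conflict_of_le_of_le {a b a' b' : β} (hc : S.conflict a' b') (ha : S.le a' a)
    (hb : S.le b' b) : S.conflict a b :=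
  S.conflict_symm (S.conflict_inherit (S.conflict_symm (S.conflict_inherit hc hb)) ha)

theorem not_le_of_conflict {a b : β} (hc : S.conflict a b) : ¬ S.le a b := fun h =>
  S.conflict_irrefl b (S.conflict_of_le_of_le hc h (S.le_refl b))

theorem minConflictOf_symm {a b : β} (hab : MinConflictOf S.le S.conflict a b) :
    MinConflictOf S.le S.conflict b a :=
  ⟨S.conflict_symm hab.1, fun b' a' hb' ha' hc => (hab.2 a' b' ha' hb' (S.conflict_symm hc)).symm⟩

theorem consistent_of_subset_causes {a b : β} {y : Set β}
    (hab : MinConflictOf S.le S.conflict a b) (hy : ∀ e ∈ y, S.le e a ∨ S.le e b) (hb : b ∉ y) :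
    ∀ e ∈ y, ∀ e' ∈ y, ¬ S.conflict e e' := by
  intro e he e' he' hc
  rcases hy e he with hea | heb <;> rcases hy e' he' with hea' | heb'
  · exact S.conflict_irrefl a (S.conflict_of_le_of_le hc hea hea')
  · exact hb ((hab.2 e e' hea heb' hc).2 ▸ he')
  · exact hb ((hab.2 e' e hea' heb (S.conflict_symm hc)).2 ▸ he)
  · exact S.conflict_irrefl b (S.conflict_of_le_of_le hc heb heb')

theorem config_insert_strictCauses_union {a b : β} (hab : MinConflictOf S.le S.conflict a b) :
    ConfigOf S.le S.conflict (insert a (S.strictCauses a ∪ S.strictCauses b)) := by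
  have hsub : ∀ e ∈ insert a (S.strictCauses a ∪ S.strictCauses b), S.le e a ∨ S.le e b := by
    rintro e (rfl | ⟨h, -⟩ | ⟨h, -⟩)
    exacts [.inl (S.le_refl e), .inl h, .inr h]
  refine ⟨((S.finite_causes a).union (S.finite_causes b)).subset hsub,
    ((S.isDownClosed_strictCauses a).union (S.isDownClosed_strictCauses b)).insert
      fun e he => (S.eq_or_mem_strictCauses he).imp_right .inl,
    S.consistent_of_subset_causes hab hsub ?_⟩
  rintro (h | ⟨h, -⟩ | ⟨-, h⟩)
  · exact S.conflict_irrefl a (h ▸ hab.1)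
  · exact S.not_le_of_conflict (S.conflict_symm hab.1) h
  · exact h rfl

theorem notMem_strictCauses_union {a b : β} (hc : S.conflict a b) :
    a ∉ S.strictCauses a ∪ S.strictCauses b := by
  rintro (⟨-, h⟩ | ⟨h, -⟩)
  exacts [h rfl, S.not_le_of_conflict hc h]

theorem dsp_notMem_image {x : Set β} {m : β} (hm : m ∉ x)
    (hxm : ConfigOf S.le S.conflict (insert m x)) : S.dsp m ∉ S.dsp '' x := by
  rintro ⟨e, he, hdsp⟩
  exact hm (S.dsp_locInj _ hxm e (.inr he) m (.inl rfl) hdsp ▸ he)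

theorem eq_of_dsp_eq {x : Set β} {m m' : β} (hx : ConfigOf S.le S.conflict x)
    (hm : m ∉ x) (hxm : ConfigOf S.le S.conflict (insert m x))
    (hm' : m' ∉ x) (hxm' : ConfigOf S.le S.conflict (insert m' x))
    (hneg : A.pol (S.dsp m) = false) (hdsp : S.dsp m = S.dsp m') : m = m' := by
  have hy := S.dsp_config _ hxm
  rw [Set.image_insert_eq] at hy
  exact (S.receptive x hx _ hneg (S.dsp_notMem_image hm hxm) hy).unique ⟨hm, hxm, rfl⟩
    ⟨hm', hxm', hdsp.symm⟩

theorem exists_immOf {n₀ m : β} (h : S.le n₀ m) (hne : n₀ ≠ m) :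
    ∃ n, S.le n₀ n ∧ immOf S.le n m := by
  -- an event strictly between `n₀` and `m` with the most causes is an immediate cause of `m`
  obtain ⟨n, ⟨hn₀, hnm, hne'⟩, hmax⟩ := Set.Finite.exists_maximalFor
    (fun c => {e | S.le e c}.ncard) {c | S.le n₀ c ∧ S.le c m ∧ c ≠ m}
    ((S.finite_causes m).subset fun c hc => hc.2.1) ⟨n₀, S.le_refl n₀, h, hne⟩
  refine ⟨n, hn₀, hnm, hne', fun c hnc hcm => ?_⟩
  by_contra! hc
  have hlt : {e | S.le e n}.ncard < {e | S.le e c}.ncard :=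
    Set.ncard_lt_ncard ⟨fun e he => S.le_trans he hnc,
      fun hsub => hc.1 (S.le_antisymm (hsub (S.le_refl c)) hnc)⟩ (S.finite_causes c)
  exact hlt.not_ge (hmax ⟨S.le_trans hn₀ hnc, hcm, hc.2⟩ hlt.le)

theorem mem_of_immOf_of_dsp_eq {x y : Set β} {n m m' : β} (hxy : x ⊆ y)
    (hy : ConfigOf S.le S.conflict y) (hxm' : ConfigOf S.le S.conflict (insert m' x))
    (hn : n ∈ y) (hnm : immOf S.le n m) (hneg : A.pol (S.dsp m) = false)
    (hdsp : S.dsp m = S.dsp m') : n ∈ x := by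
  have himm : immOf A.le (S.dsp n) (S.dsp m) := S.courteous n m hnm (.inr hneg)
  obtain ⟨k, rfl | hk, hkn⟩ : S.dsp n ∈ S.dsp '' insert m' x :=
    (S.dsp_config _ hxm').2.1 _ ⟨m', .inl rfl, rfl⟩ _ (hdsp ▸ himm.1)
  · exact absurd (hkn.symm.trans hdsp.symm) himm.2.1
  · rwa [S.dsp_locInj y hy n hn k (hxy hk) hkn.symm]

theorem conflict_dsp_of_extensions {x : Set β} {m₁ m₂ : β} (hx : ConfigOf S.le S.conflict x)
    (hm₁ : m₁ ∉ x) (hxm₁ : ConfigOf S.le S.conflict (insert m₁ x))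
    (hm₂ : m₂ ∉ x) (hxm₂ : ConfigOf S.le S.conflict (insert m₂ x))
    (hneg : A.pol (S.dsp m₂) = false) (hc : S.conflict m₁ m₂) :
    A.conflict (S.dsp m₁) (S.dsp m₂) := by
  by_contra hnc
  have hy₁ := S.dsp_config _ hxm₁
  have hy₂ := S.dsp_config _ hxm₂
  rw [Set.image_insert_eq] at hy₁ hy₂
  have hne : S.dsp m₁ ≠ S.dsp m₂ := fun h => S.conflict_irrefl m₂
    ((S.eq_of_dsp_eq hx hm₁ hxm₁ hm₂ hxm₂ (h ▸ hneg) h) ▸ hc)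
  obtain ⟨m, ⟨hm, hxm, hdsp⟩, -⟩ := S.receptive (insert m₁ x) hxm₁ (S.dsp m₂) hneg
    (by
      rw [Set.image_insert_eq]
      rintro (h | h)
      exacts [hne h.symm, S.dsp_notMem_image hm₂ hxm₂ h])
    (by
      rw [Set.image_insert_eq]
      exact hy₁.insert_insert hy₂ hnc fun h => hnc (A.conflict_symm h))
  have hm₁m : ¬ S.le m₁ m := fun hle => by
    obtain ⟨n, hm₁n, hnm⟩ := S.exists_immOf hle fun h => hm (.inl h.symm)
    have hn : n ∈ insert m₁ x :=
      (hxm.2.1 m (.inl rfl) n hnm.1).resolve_left hnm.2.1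
    exact hm₁ (hx.2.1 n (S.mem_of_immOf_of_dsp_eq (Set.subset_insert _ _) hxm₁ hxm₂ hn hnm
      (hdsp ▸ hneg) hdsp) m₁ hm₁n)
  have hxm' : ConfigOf S.le S.conflict (insert m x) :=
    hxm.of_subset (Set.insert_subset_insert (Set.subset_insert _ _)) <| IsDownClosed.insert hx.2.1 fun e he =>
      (hxm.2.1 m (.inl rfl) e he).imp_right fun h => h.resolve_left (by rintro rfl; exact hm₁m he)
  obtain rfl := S.eq_of_dsp_eq hx (fun h => hm (.inr h)) hxm' hm₂ hxm₂ (hdsp ▸ hneg) hdsp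
  exact hxm.2.2 m₁ (.inr (.inl rfl)) m (.inl rfl) hc

end CausalStrategy

theorem negative_minimal_conflict_displays_general {α β : Type} (A : Arena α)
    (S : CausalStrategy A β) (m1 m2 : β)
    (h2 : A.pol (S.dsp m2) = false)
    (hmc : MinConflictOf S.le S.conflict m1 m2) :
    MinConflictOf A.le A.conflict (S.dsp m1) (S.dsp m2) := by
  have hxm₁ := S.config_insert_strictCauses_union hmc
  have hxm₂ := S.config_insert_strictCauses_union (S.minConflictOf_symm hmc)
  have hm₁ := S.notMem_strictCauses_union hmc.1
  have hm₂ := S.notMem_strictCauses_union (S.conflict_symm hmc.1)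
  rw [Set.union_comm] at hxm₂ hm₂
  have hx := hxm₁.of_subset (Set.subset_insert _ _)
    ((S.isDownClosed_strictCauses m1).union (S.isDownClosed_strictCauses m2))
  have hy₁ := S.dsp_config _ hxm₁
  have hy₂ := S.dsp_config _ hxm₂
  rw [Set.image_insert_eq] at hy₁ hy₂
  exact minConflictOf_of_config_insert hy₁ hy₂
    (S.conflict_dsp_of_extensions hx hm₁ hxm₁ hm₂ hxm₂ h2 hmc.1)

/-- If `σ` is a causal strategy on an arena `A` and `m1, m2` are negative events of
`σ` in minimal conflict, then their displays `∂(m1)` and `∂(m2)` are in minimal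
conflict in `A`. -/
theorem negative_minimal_conflict_displays {α β : Type} (A : Arena α)
    (S : CausalStrategy A β) (m1 m2 : β)
    (h1 : A.pol (S.dsp m1) = false) (h2 : A.pol (S.dsp m2) = false)
    (hmc : MinConflictOf S.le S.conflict m1 m2) :
    MinConflictOf A.le A.conflict (S.dsp m1) (S.dsp m2) :=
  negative_minimal_conflict_displays_general A S m1 m2 h2 hmc
end

section
/- The non-alternating unfolding of a causal strategy is a non-alternating strategy: for a causal strategy σ on a negative arena A, the set of displays of linearizations of configurations of σ is non-empty, prefix-closed, receptive, and courteous. -/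
set_option autoImplicit false

/-- A non-alternating play: a sequence of pairwise-distinct events whose every
prefix reaches a configuration, starting (if non-empty) with a negative move. -/
def NAltPlayOf {γ : Type} (le conflict : γ → γ → Prop) (pol : γ → Bool)
    (s : List γ) : Prop :=
  (∀ t, t <+: s → ConfigOf le conflict {a | a ∈ t}) ∧
  s.Nodup ∧
  (∀ a : γ, s[0]? = some a → pol a = false)

/-- The non-alternating unfolding of a causal strategy: the displays (applied
move-wise) of the non-alternating plays of `σ` (linearizations of its
configurations). -/
def Unfold {α β : Type} {A : Arena α} (S : CausalStrategy A β) : Set (List α) :=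
  {s | ∃ t : List β,
        NAltPlayOf S.le S.conflict (fun m => A.pol (S.dsp m)) t ∧ s = t.map S.dsp}

/-!
The display of a play of `σ` is a play of `A` because the display preserves configurations and is
locally injective. Prefix-closure is inherited from the plays of `σ`, and receptivity from that of
`σ` at the configuration reached. For courtesy, let `m n` be consecutive events of a play of `σ`,
displayed to `a b`. If `m ≤ n`, the link is immediate, so courtesy of `σ` gives `a ⋗ b` in `A`,
and `b` could not be played before `a`. Hence `n` does not depend on `m`, the two may be swapped,
and the one new prefix `x ∪ {n}` is a configuration. Swapped plays still start negatively since
minimal events of `σ` are negative.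
-/

namespace List

theorem setOf_mem_map {γ δ : Type*} (f : γ → δ) (l : List γ) :
    {a | a ∈ l.map f} = f '' {a | a ∈ l} := by
  ext; simp

theorem setOf_mem_concat {γ : Type*} (l : List γ) (a : γ) :
    {x | x ∈ l ++ [a]} = insert a {x | x ∈ l} := by
  ext; simp [or_comm]

theorem setOf_mem_append_cons_cons {γ : Type*} (u w : List γ) (m n : γ) :
    {a | a ∈ u ++ m :: n :: w} = insert m (insert n {a | a ∈ u ++ w}) := by
  ext; simp only [Set.mem_ofPred_eq, mem_append, mem_cons, Set.mem_insert_iff]; tauto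

end List

section EventStructure

variable {γ : Type} {le conflict : γ → γ → Prop} {pol : γ → Bool}

theorem ConfigOf.insert_of_not_le {x : Set γ} {m n : γ} (hx : ConfigOf le conflict x)
    (hy : ConfigOf le conflict (insert m (insert n x))) (hmn : ¬ le m n) :
    ConfigOf le conflict (insert n x) := by
  have hsub : insert n x ⊆ insert m (insert n x) := Set.subset_insert _ _
  refine ⟨hx.1.insert n, ?_, fun e he e' he' => hy.2.2 e (hsub he) e' (hsub he')⟩
  rintro e (rfl | he) e' hle
  · rcases hy.2.1 e (by simp) e' hle with rfl | he'
    · exact absurd hle hmn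
    · exact he'
  · exact Or.inr (hx.2.1 e he e' hle)

theorem ConfigOf.immOf_of_le {x : Set γ} {m n : γ} (hx : ConfigOf le conflict x)
    (hy : ConfigOf le conflict (insert m (insert n x))) (hmx : m ∉ x) (hmn : m ≠ n)
    (hle : le m n) : immOf le m n := by
  refine ⟨hle, hmn, fun c hmc hcn => ?_⟩
  rcases hy.2.1 n (by simp) c hcn with rfl | rfl | hc
  · exact Or.inl rfl
  · exact Or.inr rfl
  · exact absurd (hx.2.1 c hc m hmc) hmx

theorem NAltPlayOf.nil : NAltPlayOf le conflict pol [] := by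
  refine ⟨fun t ht => ?_, List.nodup_nil, by simp⟩
  rw [List.prefix_nil.mp ht]
  exact ⟨by simp, by simp, by simp⟩

theorem NAltPlayOf.of_isPrefix {s t : List γ} (hst : s <+: t)
    (ht : NAltPlayOf le conflict pol t) : NAltPlayOf le conflict pol s := by
  refine ⟨fun q hq => ht.1 q (hq.trans hst), ht.2.1.sublist hst.sublist, fun a ha => ?_⟩
  obtain ⟨r, rfl⟩ := hst
  cases s with
  | nil => simp at ha
  | cons b s => exact ht.2.2 a (by simpa using ha)

theorem NAltPlayOf.of_configOf (hneg : ∀ e, MinimalOf le e → pol e = false) {s : List γ}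
    (hs : ∀ t, t <+: s → ConfigOf le conflict {a | a ∈ t}) (hnd : s.Nodup) :
    NAltPlayOf le conflict pol s := by
  refine ⟨hs, hnd, fun a ha => hneg a fun a' ha' => ?_⟩
  obtain ⟨s, rfl⟩ : ∃ s', s = a :: s' := by
    cases s with
    | nil => simp at ha
    | cons b s' => exact ⟨s', by simpa using ha⟩
  simpa using (hs [a] (by simp)).2.1 a (by simp) a' ha'

theorem NAltPlayOf.concat (hneg : ∀ e, MinimalOf le e → pol e = false) {t : List γ} {m : γ}
    (ht : NAltPlayOf le conflict pol t) (hmt : m ∉ t)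
    (hc : ConfigOf le conflict (insert m {a | a ∈ t})) :
    NAltPlayOf le conflict pol (t ++ [m]) := by
  refine .of_configOf hneg (fun q hq => ?_) (List.nodup_append.mpr ⟨ht.2.1, by simp, ?_⟩)
  · rcases List.prefix_concat_iff.mp hq with rfl | hq
    · rwa [List.setOf_mem_concat]
    · exact ht.1 q hq
  · rintro x hx y hy rfl
    exact hmt (by simpa [List.mem_singleton.mp hy] using hx)

theorem NAltPlayOf.immOf_of_le {u w : List γ} {m n : γ}
    (h : NAltPlayOf le conflict pol (u ++ m :: n :: w)) (hle : le m n) : immOf le m n := by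
  have hy := h.1 (u ++ [m, n]) ⟨w, by simp⟩
  rw [List.setOf_mem_append_cons_cons, List.append_nil] at hy
  have hnd := List.nodup_append.mp h.2.1
  have hmu : m ∉ u := fun hm => hnd.2.2 m hm m (by simp) rfl
  have hmn : m ≠ n := fun e => (List.nodup_cons.mp hnd.2.1).1 (by simp [e])
  exact (h.1 u (by simp)).immOf_of_le hy hmu hmn hle

theorem NAltPlayOf.swap (hneg : ∀ e, MinimalOf le e → pol e = false) {u w : List γ} {m n : γ}
    (h : NAltPlayOf le conflict pol (u ++ m :: n :: w)) (hmn : ¬ le m n) :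
    NAltPlayOf le conflict pol (u ++ n :: m :: w) := by
  have hu : ConfigOf le conflict {a | a ∈ u} := h.1 u (by simp)
  refine .of_configOf hneg (fun q hq => ?_)
    ((List.Perm.append_left u (List.Perm.swap n m w)).nodup h.2.1)
  rcases List.prefix_or_prefix_of_prefix hq (List.prefix_append u _) with hqu | ⟨r, rfl⟩
  · exact h.1 q (hqu.trans (by simp))
  rcases List.prefix_cons_iff.mp ((List.prefix_append_right_inj u).mp hq) with
    rfl | ⟨r, rfl, hr⟩
  · simpa using hu
  rcases List.prefix_cons_iff.mp hr with rfl | ⟨p, rfl, hp⟩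
  · have hy := h.1 (u ++ [m, n]) ⟨w, by simp⟩
    rw [List.setOf_mem_append_cons_cons, List.append_nil] at hy
    rw [List.setOf_mem_concat]
    exact hu.insert_of_not_le hy hmn
  · have hc := h.1 (u ++ m :: n :: p) (by simpa using hp)
    rwa [List.setOf_mem_append_cons_cons, Set.insert_comm, ← List.setOf_mem_append_cons_cons]

end EventStructure

namespace CausalStrategy

variable {α β : Type} {A : Arena α} (S : CausalStrategy A β)

theorem nAltPlayOf_map_dsp {t : List β}
    (ht : NAltPlayOf S.le S.conflict (fun m => A.pol (S.dsp m)) t) :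
    NAltPlayOf A.le A.conflict A.pol (t.map S.dsp) := by
  refine ⟨fun q hq => ?_, ht.2.1.map_on fun x hx y hy =>
    S.dsp_locInj _ (ht.1 t (List.prefix_refl t)) x hx y hy, fun a ha => ?_⟩
  · obtain ⟨p, hp, rfl⟩ := List.prefix_map_iff.mp hq
    rw [List.setOf_mem_map]
    exact S.dsp_config _ (ht.1 p hp)
  · cases t with
    | nil => simp at ha
    | cons m t =>
      obtain rfl : S.dsp m = a := by simpa using ha
      exact ht.2.2 m (by simp)

theorem nil_mem_unfold : [] ∈ Unfold S := ⟨[], .nil, rfl⟩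

theorem mem_unfold_of_prefix {s t : List α} (hst : s <+: t) (ht : t ∈ Unfold S) :
    s ∈ Unfold S := by
  obtain ⟨u, hu, rfl⟩ := ht
  obtain ⟨p, hp, rfl⟩ := List.prefix_map_iff.mp hst
  exact ⟨p, hu.of_isPrefix hp, rfl⟩

theorem nAltPlayOf_of_mem_unfold {s : List α} (hs : s ∈ Unfold S) :
    NAltPlayOf A.le A.conflict A.pol s := by
  obtain ⟨t, ht, rfl⟩ := hs
  exact S.nAltPlayOf_map_dsp ht

theorem concat_mem_unfold {s : List α} {a : α} (hs : s ∈ Unfold S) (ha : A.pol a = false)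
    (hsa : NAltPlayOf A.le A.conflict A.pol (s ++ [a])) : s ++ [a] ∈ Unfold S := by
  obtain ⟨t, ht, rfl⟩ := hs
  have hx : ConfigOf S.le S.conflict {e | e ∈ t} := ht.1 t (List.prefix_refl t)
  have hat : a ∉ S.dsp '' {e | e ∈ t} := by
    rw [← List.setOf_mem_map]
    exact fun hmem => List.disjoint_of_nodup_append hsa.2.1 hmem (List.mem_singleton_self a)
  have hc : ConfigOf A.le A.conflict (insert a (S.dsp '' {e | e ∈ t})) := by
    rw [← List.setOf_mem_map, ← List.setOf_mem_concat]
    exact hsa.1 _ (List.prefix_refl _)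
  obtain ⟨m, ⟨hmt, hm, rfl⟩, -⟩ := S.receptive _ hx a ha hat hc
  exact ⟨t ++ [m], ht.concat S.negative hmt hm, by simp⟩

theorem not_le_of_nAltPlayOf_swap {u w : List β} {m n : β}
    (h : NAltPlayOf S.le S.conflict (fun m => A.pol (S.dsp m)) (u ++ m :: n :: w))
    (hpol : A.pol (S.dsp n) = false ∨ A.pol (S.dsp m) = true)
    (hswap : NAltPlayOf A.le A.conflict A.pol (u.map S.dsp ++ [S.dsp n])) : ¬ S.le m n := by
  intro hle
  have himm := S.courteous m n (h.immOf_of_le hle) hpol.symm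
  have hmem := (hswap.1 _ (List.prefix_refl _)).2.1 (S.dsp n) (by simp) (S.dsp m) himm.1
  have hnd := (S.nAltPlayOf_map_dsp h).2.1
  rw [List.map_append, List.map_cons] at hnd
  rcases List.mem_append.mp hmem with hu | hn
  · exact List.disjoint_of_nodup_append hnd hu (List.mem_cons_self ..)
  · exact himm.2.1 (List.mem_singleton.mp hn)

theorem swap_mem_unfold {s t : List α} {a b : α} (hs : s ++ a :: b :: t ∈ Unfold S)
    (hpol : A.pol b = false ∨ A.pol a = true)
    (hsb : NAltPlayOf A.le A.conflict A.pol (s ++ [b])) : s ++ b :: a :: t ∈ Unfold S := by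
  obtain ⟨l, hl, hmap⟩ := hs
  obtain ⟨u, l₁, rfl, rfl, hl₁⟩ := List.map_eq_append_iff.mp hmap.symm
  obtain ⟨m, l₂, rfl, rfl, hl₂⟩ := List.map_eq_cons_iff.mp hl₁
  obtain ⟨n, w, rfl, rfl, rfl⟩ := List.map_eq_cons_iff.mp hl₂
  have hmn := S.not_le_of_nAltPlayOf_swap hl hpol hsb
  exact ⟨u ++ n :: m :: w, hl.swap S.negative hmn, by simp⟩

end CausalStrategy

theorem unfolding_is_nonAlternating_strategy_general {α β : Type} (A : Arena α)
    (S : CausalStrategy A β) :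
    ([] ∈ Unfold S) ∧
    (∀ s t : List α, s <+: t → t ∈ Unfold S → s ∈ Unfold S) ∧
    (∀ s ∈ Unfold S, NAltPlayOf A.le A.conflict A.pol s) ∧
    (∀ (s : List α) (a : α), s ∈ Unfold S → A.pol a = false →
        NAltPlayOf A.le A.conflict A.pol (s ++ [a]) → s ++ [a] ∈ Unfold S) ∧
    (∀ (s t : List α) (a b : α), (s ++ a :: b :: t) ∈ Unfold S →
        (A.pol b = false ∨ A.pol a = true) →
        NAltPlayOf A.le A.conflict A.pol (s ++ [b]) →
        (s ++ b :: a :: t) ∈ Unfold S) :=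
  ⟨S.nil_mem_unfold, fun _ _ => S.mem_unfold_of_prefix, fun _ => S.nAltPlayOf_of_mem_unfold,
    fun _ _ => S.concat_mem_unfold, fun _ _ _ _ => S.swap_mem_unfold⟩

/-- The non-alternating unfolding of a causal strategy on a negative arena is a
non-alternating strategy: a set of non-alternating plays which is non-empty,
prefix-closed, receptive, and courteous. -/
theorem unfolding_is_nonAlternating_strategy {α β : Type} (A : Arena α)
    (hneg : ∀ a : α, MinimalOf A.le a → A.pol a = false)
    (S : CausalStrategy A β) :
    ([] ∈ Unfold S) ∧
    (∀ s t : List α, s <+: t → t ∈ Unfold S → s ∈ Unfold S) ∧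
    (∀ s ∈ Unfold S, NAltPlayOf A.le A.conflict A.pol s) ∧
    (∀ (s : List α) (a : α), s ∈ Unfold S → A.pol a = false →
        NAltPlayOf A.le A.conflict A.pol (s ++ [a]) → s ++ [a] ∈ Unfold S) ∧
    (∀ (s t : List α) (a b : α), (s ++ a :: b :: t) ∈ Unfold S →
        (A.pol b = false ∨ A.pol a = true) →
        NAltPlayOf A.le A.conflict A.pol (s ++ [b]) →
        (s ++ b :: a :: t) ∈ Unfold S) :=
  unfolding_is_nonAlternating_strategy_general A S
end

section
/- If a causal strategy σ on an arena A is visible, then for every grounded causal chain ρ = ρ1 ⋗ ... ⋗ ρn of σ, the sequence of displays ∂(ρ1)...∂(ρn) is a P-view: an alternating play on A in which every non-minimal Opponent move points to the immediately preceding move. -/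
set_option autoImplicit false

/-- A grounded causal chain (gcc) of a causal strategy: a chain
`ρ 0 ⋗_σ ρ 1 ⋗_σ ...` of strategy events starting from a minimal event. -/
def IsGcc {α β : Type} {A : Arena α} (S : CausalStrategy A β) (ρ : List β) : Prop :=
  (∀ m : β, ρ[0]? = some m → MinimalOf S.le m) ∧
  (∀ (i : ℕ) (m n : β), ρ[i]? = some m → ρ[i + 1]? = some n → immOf S.le m n)

/-- A causal strategy is visible when the display of every grounded causal chain
is a configuration of the arena. -/
def VisibleStrat {α β : Type} {A : Arena α} (S : CausalStrategy A β) : Prop :=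
  ∀ ρ : List β, IsGcc S ρ → ConfigOf A.le A.conflict {a | ∃ m ∈ ρ, S.dsp m = a}

section Aux
variable {α β : Type} {A : Arena α} (S : CausalStrategy A β)

lemma gcc_le (ρ : List β) (hgcc : IsGcc S ρ) :
    ∀ (k i : ℕ) (m n : β), ρ[i]? = some m → ρ[i + k]? = some n → S.le m n := by
  intro k
  induction k with
  | zero => intro i m n hm hn; rw [Nat.add_zero, hm] at hn; cases hn; exact S.le_refl m
  | succ k ih =>
    intro i m n hm hn
    have hlen : i + (k + 1) < ρ.length := (List.getElem?_eq_some_iff.mp hn).1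
    have hk : i + k < ρ.length := by omega
    have hp : ρ[i + k]? = some ρ[i + k] := List.getElem?_eq_getElem hk
    exact S.le_trans (ih i m _ hm hp) (hgcc.2 (i + k) _ n hp hn).1

lemma gcc_ne (ρ : List β) (hgcc : IsGcc S ρ) :
    ∀ (k i : ℕ) (m n : β), ρ[i]? = some m → ρ[i + (k + 1)]? = some n → m ≠ n := by
  intro k i m n hm hn heq
  have hlen : i + (k + 1) < ρ.length := (List.getElem?_eq_some_iff.mp hn).1
  have h1 : i + 1 ≤ ρ.length := by omega
  have h1' : i < ρ.length := by omega
  have hp : ρ[i + 1]? = some ρ[i + 1] := List.getElem?_eq_getElem (by omega)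
  have himm := hgcc.2 i m _ hm hp
  have hle : S.le ρ[i + 1] n := by
    have : i + 1 + k = i + (k + 1) := by omega
    exact gcc_le S ρ hgcc k (i + 1) _ n hp (this ▸ hn)
  subst heq
  exact himm.2.1 (S.le_antisymm himm.1 hle)

lemma downclose_config (n : β) : ConfigOf S.le S.conflict {e | S.le e n} := by
  refine ⟨S.finite_causes n, fun e he e' h => S.le_trans h he, fun e he e' he' hc => ?_⟩
  exact S.conflict_irrefl n (S.conflict_symm (S.conflict_inherit (S.conflict_symm (S.conflict_inherit hc he')) he))

lemma gcc_take (ρ : List β) (hgcc : IsGcc S ρ) (k : ℕ) : IsGcc S (ρ.take k) := by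
  constructor
  · intro m hm
    rw [List.getElem?_take] at hm
    split at hm
    · exact hgcc.1 m hm
    · exact absurd hm (by simp)
  · intro i m n hm hn
    rw [List.getElem?_take] at hm hn
    split at hm
    · split at hn
      · exact hgcc.2 i m n hm hn
      · exact absurd hn (by simp)
    · exact absurd hm (by simp)

end Aux

/-- If a causal strategy `σ` on an arena `A` is visible, then for every grounded
causal chain `ρ` of `σ`, the sequence of displays is a P-view: an alternating play
on `A` in which every non-minimal Opponent move points to (is an immediate causal
successor in the arena of) the immediately preceding move. -/
theorem gcc_displays_to_pview {α β : Type} (A : Arena α) (S : CausalStrategy A β)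
    (hvis : VisibleStrat S) (ρ : List β) (hgcc : IsGcc S ρ) :
    AltPlayOf A.le A.conflict A.pol (ρ.map S.dsp) ∧
    (∀ (i : ℕ) (m n : β), ρ[i]? = some m → ρ[i + 1]? = some n →
      A.pol (S.dsp n) = false → immOf A.le (S.dsp m) (S.dsp n)) := by
  constructor
  · refine ⟨?_, ?_, ?_, ?_⟩
    · -- prefixes are configurations
      intro t ht
      have heq : t = (ρ.take t.length).map S.dsp := by
        conv_lhs => rw [List.prefix_iff_eq_take.mp ht]
        rw [List.map_take]
      obtain ⟨k, hk⟩ : ∃ k, t = (ρ.take k).map S.dsp := ⟨t.length, heq⟩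
      subst hk
      have hcfg := hvis (ρ.take k) (gcc_take S ρ hgcc k)
      have hset : {a | a ∈ (ρ.take k).map S.dsp} = {a | ∃ m ∈ ρ.take k, S.dsp m = a} := by
        ext a; simp only [Set.mem_setOf_eq, List.mem_map]
      rw [hset]; exact hcfg
    · -- nodup
      rw [List.Nodup, List.pairwise_iff_getElem]
      intro i j hi hj hij
      simp only [List.getElem_map]
      have hij' : i < j := hij
      have hi' : i < ρ.length := by simpa using hi
      have hj' : j < ρ.length := by simpa using hj
      intro heq
      have hj2 : ρ[i + (j - i)]? = some ρ[j] := by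
        rw [show i + (j - i) = j by omega]; exact List.getElem?_eq_getElem hj'
      have hj3 : ρ[i + ((j - i - 1) + 1)]? = some ρ[j] := by
        rw [show i + ((j - i - 1) + 1) = j by omega]; exact List.getElem?_eq_getElem hj'
      have hle : S.le ρ[i] ρ[j] :=
        gcc_le S ρ hgcc (j - i) i _ _ (List.getElem?_eq_getElem hi') hj2
      have hne : ρ[i] ≠ ρ[j] :=
        gcc_ne S ρ hgcc (j - i - 1) i _ _ (List.getElem?_eq_getElem hi') hj3
      exact hne (S.dsp_locInj _ (downclose_config S ρ[j]) ρ[i] hle ρ[j] (S.le_refl _) heq)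
    · -- alternation
      intro i a b ha hb
      rw [List.getElem?_map] at ha hb
      obtain ⟨m, hm, rfl⟩ := Option.map_eq_some_iff.mp ha
      obtain ⟨n, hn, rfl⟩ := Option.map_eq_some_iff.mp hb
      have himm := hgcc.2 i m n hm hn
      intro heq
      have hc : A.pol (S.dsp m) = true ∨ A.pol (S.dsp n) = false := by
        cases h : A.pol (S.dsp m)
        · right; rw [← heq, h]
        · left; rfl
      exact A.alternating (S.courteous m n himm hc) heq
    · -- negative start
      intro a ha
      rw [List.getElem?_map] at ha
      obtain ⟨m, hm, rfl⟩ := Option.map_eq_some_iff.mp ha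
      exact S.negative m (hgcc.1 m hm)
  · intro i m n hm hn hneg
    exact S.courteous m n (hgcc.2 i m n hm hn) (Or.inr hneg)
end

section
/- For negative arenas A and deterministic causal strategies: the copycat strategy cc_A on A ⊢ A (= A^⊥ ∥ A) has +-covered configurations exactly the diagonal ones, i.e., {x ∥ x | x a configuration of A}, and its +-covered symmetries are exactly {θ ∥ θ | θ a symmetry of A}. -/
set_option autoImplicit false

/-- Strip the side tag of an event of `A ⊢ A = A^⊥ ∥ A` (left = `inl`, right = `inr`). -/
def strip {α : Type} : α ⊕ α → α := Sum.elim id id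

/-- Polarity of events of `A ⊢ A`: the left copy is `A^⊥`, with polarity reversed. -/
def ccPol {α : Type} (A : ArenaS α) : α ⊕ α → Bool
  | Sum.inl a => ! A.pol a
  | Sum.inr a => A.pol a

/-- The causal order of the copycat strategy on `A ⊢ A`: the orders of the two
copies of `A`, together with the links from each negative occurrence of a move to
the positive occurrence of the same move on the other side. -/
def ccLE {α : Type} (A : ArenaS α) (p q : α ⊕ α) : Prop :=
  (A.le (strip p) (strip q) ∧ strip p ≠ strip q) ∨
  (strip p = strip q ∧ (p = q ∨ (ccPol A p = false ∧ ccPol A q = true)))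

/-- Conflict on `A ⊢ A`, inherited from `A`. -/
def ccConflict {α : Type} (A : ArenaS α) (p q : α ⊕ α) : Prop :=
  A.conflict (strip p) (strip q)

/-- A set of events is +-covered (for a causal order and polarity assignment) when
all its maximal events are positive. -/
def PlusCovered {γ : Type} (le : γ → γ → Prop) (pol : γ → Bool) (x : Set γ) : Prop :=
  ∀ e ∈ x, (∀ e' ∈ x, le e e' → e' = e) → pol e = true

/-- The parallel composition `θ1 ∥ θ2` of two symmetries, as a set of pairs of
events of `A ⊢ A`. -/
def parPair {α : Type} (θ1 θ2 : Set (α × α)) : Set ((α ⊕ α) × (α ⊕ α)) :=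
  {p | (∃ q ∈ θ1, p = (Sum.inl q.1, Sum.inl q.2)) ∨
       (∃ q ∈ θ2, p = (Sum.inr q.1, Sum.inr q.2))}

/-- The isomorphism family of the copycat strategy `cc_A`: the bijections
`θ1 ∥ θ2` between configurations of `cc_A` with `θ1, θ2 ∈ Ã`, such that `θ1` and
`θ2` agree on the intersection of their domains (and codomains), the restriction
`θ1 ∩ θ2` being itself a symmetry of `A`. -/
def ccSym {α : Type} (A : ArenaS α) : Set (Set ((α ⊕ α) × (α ⊕ α))) :=
  {Θ | ConfigOf (ccLE A) (ccConflict A) (symDom Θ) ∧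
       ConfigOf (ccLE A) (ccConflict A) (symCod Θ) ∧
       ∃ θ1 ∈ A.Sym, ∃ θ2 ∈ A.Sym, Θ = parPair θ1 θ2 ∧
         symDom (θ1 ∩ θ2) = symDom θ1 ∩ symDom θ2 ∧
         symCod (θ1 ∩ θ2) = symCod θ1 ∩ symCod θ2 ∧
         (θ1 ∩ θ2) ∈ A.Sym}


section Aux
variable {α : Type}

/-- Swap the side of an event of `A ⊢ A`. -/
def ccMirror : α ⊕ α → α ⊕ α := Sum.elim Sum.inr Sum.inl

@[simp] lemma strip_inl (a : α) : strip (Sum.inl a : α ⊕ α) = a := rfl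
@[simp] lemma strip_inr (a : α) : strip (Sum.inr a : α ⊕ α) = a := rfl

@[simp] lemma strip_ccMirror (p : α ⊕ α) : strip (ccMirror p) = strip p := by
  cases p <;> rfl

lemma ccPol_ccMirror (A : ArenaS α) (p : α ⊕ α) :
    ccPol A (ccMirror p) = ! ccPol A p := by
  cases p <;> simp [ccMirror, ccPol]

lemma ccMirror_ne (p : α ⊕ α) : ccMirror p ≠ p := by
  cases p <;> simp [ccMirror]

lemma ccMirror_inl (a : α) : ccMirror (Sum.inl a : α ⊕ α) = Sum.inr a := rfl
lemma ccMirror_inr (a : α) : ccMirror (Sum.inr a : α ⊕ α) = Sum.inl a := rfl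

lemma eq_or_ccMirror {p q : α ⊕ α} (h : strip p = strip q) :
    q = p ∨ q = ccMirror p := by
  cases p <;> cases q <;> simp_all [ccMirror]

/-- A negative event is below its mirror image. -/
lemma neg_le_ccMirror (A : ArenaS α) {p : α ⊕ α} (h : ccPol A p = false) :
    ccLE A p (ccMirror p) :=
  Or.inr ⟨(strip_ccMirror p).symm, Or.inr ⟨h, by rw [ccPol_ccMirror, h]; rfl⟩⟩

/-- A positive event is above its mirror image. -/
lemma ccMirror_le_pos (A : ArenaS α) {p : α ⊕ α} (h : ccPol A p = true) :
    ccLE A (ccMirror p) p :=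
  Or.inr ⟨strip_ccMirror p, Or.inr ⟨by rw [ccPol_ccMirror, h]; rfl, h⟩⟩

lemma mem_diag {y : Set α} {p : α ⊕ α} :
    p ∈ (Sum.inl '' y ∪ Sum.inr '' y) ↔ strip p ∈ y := by
  cases p <;> simp

/-- In a +-covered configuration of copycat, every event's mirror is present. -/
lemma both_copies (A : ArenaS α) {x : Set (α ⊕ α)}
    (hx : ConfigOf (ccLE A) (ccConflict A) x)
    (hcov : PlusCovered (ccLE A) (ccPol A) x) :
    ∀ p ∈ x, ccMirror p ∈ x := by
  intro p hp
  rcases hpol : ccPol A p with _ | _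
  · -- negative: not maximal
    have hnotmax : ¬ (∀ e' ∈ x, ccLE A p e' → e' = p) := by
      intro hmax
      have := hcov p hp hmax
      rw [hpol] at this; exact Bool.false_ne_true this
    push_neg at hnotmax
    obtain ⟨e, he, hpe, hne⟩ := hnotmax
    rcases hpe with ⟨hle, hsne⟩ | ⟨hseq, _⟩
    · -- strictly above: mirror is also below e
      exact hx.2.1 e he (ccMirror p)
        (Or.inl ⟨by rwa [strip_ccMirror], by rwa [strip_ccMirror]⟩)
    · rcases eq_or_ccMirror hseq with h | h
      · exact absurd h hne
      · rwa [← h]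
  · -- positive: mirror is below p
    exact hx.2.1 p hp (ccMirror p) (ccMirror_le_pos A hpol)

/-- The diagonal configuration over a configuration of `A` is a +-covered
configuration of copycat. -/
lemma diag_config (A : ArenaS α) {y : Set α} (hy : ConfigOf A.le A.conflict y) :
    ConfigOf (ccLE A) (ccConflict A) (Sum.inl '' y ∪ Sum.inr '' y) ∧
    PlusCovered (ccLE A) (ccPol A) (Sum.inl '' y ∪ Sum.inr '' y) := by
  refine ⟨⟨(hy.1.image _).union (hy.1.image _), ?_, ?_⟩, ?_⟩
  · intro e he e' hle
    rw [mem_diag] at he ⊢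
    rcases hle with ⟨h1, _⟩ | ⟨h1, _⟩
    · exact hy.2.1 _ he _ h1
    · rwa [h1]
  · intro e he e' he' hc
    rw [mem_diag] at he he'
    exact hy.2.2 _ he _ he' hc
  · intro e he hmax
    by_contra hpos
    have hneg' : ccPol A e = false := by
      cases h : ccPol A e
      · rfl
      · exact absurd h hpos
    have hm : ccMirror e ∈ (Sum.inl '' y ∪ Sum.inr '' y) := by
      rw [mem_diag, strip_ccMirror]; rw [mem_diag] at he; exact he
    have := hmax _ hm (neg_le_ccMirror A hneg')
    exact ccMirror_ne e this

/-- The +-covered configurations of copycat are exactly the diagonal ones. -/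
lemma cc_config_char (A : ArenaS α) (x : Set (α ⊕ α)) :
    (ConfigOf (ccLE A) (ccConflict A) x ∧ PlusCovered (ccLE A) (ccPol A) x) ↔
    ∃ y : Set α, ConfigOf A.le A.conflict y ∧ x = Sum.inl '' y ∪ Sum.inr '' y := by
  constructor
  · rintro ⟨hx, hcov⟩
    refine ⟨{a | Sum.inl a ∈ x}, ⟨?_, ?_, ?_⟩, ?_⟩
    · exact hx.1.preimage (Set.injOn_of_injective Sum.inl_injective)
    · intro a ha a' hle
      by_cases h : a' = a
      · rwa [h]
      · exact hx.2.1 _ ha (Sum.inl a') (Or.inl ⟨hle, h⟩)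
    · intro a ha a' ha' hc
      exact hx.2.2 _ ha _ ha' hc
    · ext p
      constructor
      · intro hp
        rw [mem_diag]
        cases p with
        | inl a => exact hp
        | inr a => exact both_copies A hx hcov _ hp
      · intro hp
        rw [mem_diag] at hp
        cases p with
        | inl a => exact hp
        | inr a => exact both_copies A hx hcov _ hp
  · rintro ⟨y, hy, rfl⟩
    exact diag_config A hy

lemma symDom_parPair (θ1 θ2 : Set (α × α)) :
    symDom (parPair θ1 θ2) = Sum.inl '' symDom θ1 ∪ Sum.inr '' symDom θ2 := by
  ext p
  simp only [symDom, parPair, Set.mem_image, Set.mem_union, Set.mem_setOf_eq]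
  constructor
  · rintro ⟨q, (⟨r, hr, rfl⟩ | ⟨r, hr, rfl⟩), rfl⟩
    · exact Or.inl ⟨r.1, ⟨r, hr, rfl⟩, rfl⟩
    · exact Or.inr ⟨r.1, ⟨r, hr, rfl⟩, rfl⟩
  · rintro (⟨a, ⟨r, hr, rfl⟩, rfl⟩ | ⟨a, ⟨r, hr, rfl⟩, rfl⟩)
    · exact ⟨(Sum.inl r.1, Sum.inl r.2), Or.inl ⟨r, hr, rfl⟩, rfl⟩
    · exact ⟨(Sum.inr r.1, Sum.inr r.2), Or.inr ⟨r, hr, rfl⟩, rfl⟩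

lemma symCod_parPair (θ1 θ2 : Set (α × α)) :
    symCod (parPair θ1 θ2) = Sum.inl '' symCod θ1 ∪ Sum.inr '' symCod θ2 := by
  ext p
  simp only [symCod, parPair, Set.mem_image, Set.mem_union, Set.mem_setOf_eq]
  constructor
  · rintro ⟨q, (⟨r, hr, rfl⟩ | ⟨r, hr, rfl⟩), rfl⟩
    · exact Or.inl ⟨r.2, ⟨r, hr, rfl⟩, rfl⟩
    · exact Or.inr ⟨r.2, ⟨r, hr, rfl⟩, rfl⟩
  · rintro (⟨a, ⟨r, hr, rfl⟩, rfl⟩ | ⟨a, ⟨r, hr, rfl⟩, rfl⟩)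
    · exact ⟨(Sum.inl r.1, Sum.inl r.2), Or.inl ⟨r, hr, rfl⟩, rfl⟩
    · exact ⟨(Sum.inr r.1, Sum.inr r.2), Or.inr ⟨r, hr, rfl⟩, rfl⟩

/-- A subgraph of a bijection graph with the same domain is the whole graph. -/
lemma graph_eq_of_subset_dom {θ θ' : Set (α × α)} (hg : IsBijGraph θ)
    (hsub : θ' ⊆ θ) (hdom : symDom θ ⊆ symDom θ') : θ = θ' := by
  apply Set.Subset.antisymm _ hsub
  rintro ⟨a, b⟩ hab
  obtain ⟨⟨a', b'⟩, hq, ha'⟩ := hdom ⟨(a, b), hab, rfl⟩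
  have : b = b' := (hg _ hab _ (hsub hq)).1 ha'.symm
  rw [this]
  cases ha'
  exact hq

end Aux

/-- For a negative arena `A`, the +-covered configurations of the copycat strategy
`cc_A` on `A ⊢ A` are exactly the diagonal ones `x ∥ x` for `x` a configuration of
`A`, and its +-covered symmetries are exactly the `θ ∥ θ` for `θ` a symmetry of
`A`. -/
theorem copycat_plusCovered_characterisation {α : Type} (A : ArenaS α)
    (hneg : ∀ a : α, MinimalOf A.le a → A.pol a = false) :
    (∀ x : Set (α ⊕ α),
        (ConfigOf (ccLE A) (ccConflict A) x ∧ PlusCovered (ccLE A) (ccPol A) x) ↔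
        ∃ y : Set α, ConfigOf A.le A.conflict y ∧ x = Sum.inl '' y ∪ Sum.inr '' y) ∧
    (∀ Θ : Set ((α ⊕ α) × (α ⊕ α)),
        (Θ ∈ ccSym A ∧ PlusCovered (ccLE A) (ccPol A) (symDom Θ)) ↔
        ∃ θ ∈ A.Sym, Θ = parPair θ θ) := by
  have part1 := cc_config_char A
  refine ⟨part1, fun Θ => ?_⟩
  constructor
  · rintro ⟨⟨hdom, hcod, θ1, hθ1, θ2, hθ2, rfl, hddom, hdcod, hinter⟩, hcov⟩
    obtain ⟨y, hy, hxy⟩ := (part1 (symDom (parPair θ1 θ2))).1 ⟨hdom, hcov⟩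
    rw [symDom_parPair] at hxy
    have h1 : symDom θ1 = y := by
      ext a
      have := Set.ext_iff.1 hxy (Sum.inl a)
      simpa using this
    have h2 : symDom θ2 = y := by
      ext a
      have := Set.ext_iff.1 hxy (Sum.inr a)
      simpa using this
    have e1 : θ1 = θ1 ∩ θ2 := by
      apply graph_eq_of_subset_dom (A.sym_graph _ hθ1) Set.inter_subset_left
      rw [hddom, h1, h2]
      exact Set.subset_inter (le_refl _) (le_refl _)
    have e2 : θ2 = θ1 ∩ θ2 := by
      apply graph_eq_of_subset_dom (A.sym_graph _ hθ2) Set.inter_subset_right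
      rw [hddom, h1, h2]
      exact Set.subset_inter (le_refl _) (le_refl _)
    have : θ2 = θ1 := e2.trans e1.symm
    exact ⟨θ1, hθ1, by rw [this]⟩
  · rintro ⟨θ, hθ, rfl⟩
    have hd := A.sym_dom θ hθ
    have hc := A.sym_cod θ hθ
    have hdd := diag_config A hd
    have hcc := diag_config A hc
    refine ⟨⟨?_, ?_, θ, hθ, θ, hθ, rfl, ?_, ?_, ?_⟩, ?_⟩
    · rw [symDom_parPair]; exact hdd.1
    · rw [symCod_parPair]; exact hcc.1
    · rw [Set.inter_self, Set.inter_self]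
    · rw [Set.inter_self, Set.inter_self]
    · rwa [Set.inter_self]
    · rw [symDom_parPair]; exact hdd.2
end
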